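/- arXiv:2311.00010 — 7 statements merged into one kernel-verified Lean document; each statement's English description precedes it below -/
import Mathlib

section
/- For every prime p ≥ 5, the binomial coefficient C(2p−1, p−1) is congruent to 1 modulo p³. -/
open Finset

lemma choose_sub_one_zmod (p : ℕ) (hp : p.Prime) :
    ∀ j, j < p → ((Nat.choose (p - 1) j : ZMod p)) = (-1) ^ j := by
  haveI : Fact p.Prime := ⟨hp⟩
  intro j
  induction j with
  | zero => intro _; simp
  | succ j ih =>
    intro hj
    have hj' : j < p := Nat.lt_of_succ_lt hj
    have hpas : Nat.choose p (j + 1) =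
        Nat.choose (p - 1) j + Nat.choose (p - 1) (j + 1) := by
      conv_lhs => rw [← Nat.succ_pred_eq_of_pos hp.pos]
      exact Nat.choose_succ_succ _ _
    have hdvd : p ∣ Nat.choose p (j + 1) := hp.dvd_choose_self (Nat.succ_ne_zero j) hj
    have h0 : ((Nat.choose p (j + 1) : ℕ) : ZMod p) = 0 :=
      (ZMod.natCast_eq_zero_iff _ _).mpr hdvd
    rw [hpas] at h0
    push_cast at h0
    rw [ih hj'] at h0
    have : ((Nat.choose (p - 1) (j + 1) : ℕ) : ZMod p) = -(-1) ^ j := by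
      linear_combination h0
    rw [this, pow_succ]
    ring

theorem wolstenholme (p : ℕ) (hp : p.Prime) (h5 : 5 ≤ p) :
    Nat.choose (2 * p - 1) (p - 1) ≡ 1 [MOD p ^ 3] := by
  haveI : Fact p.Prime := ⟨hp⟩
  have hp0 : 0 < p := hp.pos
  set c : ℕ → ℕ := fun k => Nat.choose p k / p with hc
  have hck : ∀ k ∈ Finset.Ico 1 p, Nat.choose p k = p * c k := by
    intro k hk
    simp only [Finset.mem_Ico] at hk
    exact (Nat.mul_div_cancel' (hp.dvd_choose_self (by omega) hk.2)).symm
  have hkc : ∀ k ∈ Finset.Ico 1 p, c k * k = Nat.choose (p - 1) (k - 1) := by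
    intro k hk
    have hk' := hk
    simp only [Finset.mem_Ico] at hk'
    have h1 : p * Nat.choose (p - 1) (k - 1) = Nat.choose p k * k := by
      have h : (p - 1).succ * Nat.choose (p - 1) (k - 1) = Nat.choose (p - 1).succ (k - 1).succ * (k - 1).succ :=
        Nat.add_one_mul_choose_eq (p - 1) (k - 1)
      have e1 : (p - 1).succ = p := by omega
      have e2 : (k - 1).succ = k := by omega
      rwa [e1, e2] at h
    rw [hck k hk, mul_assoc] at h1
    exact (Nat.eq_of_mul_eq_mul_left hp0 h1).symm
  -- key divisibility
  have key : p ∣ ∑ k ∈ Finset.Ico 1 p, (c k) ^ 2 := by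
    rw [← ZMod.natCast_eq_zero_iff]
    push_cast
    have h1 : ∀ k ∈ Finset.Ico 1 p, ((c k : ZMod p)) ^ 2 = (((k : ZMod p)) ^ 2)⁻¹ := by
      intro k hk
      have hk' := hk
      simp only [Finset.mem_Ico] at hk'
      have h2 : ((c k : ZMod p)) * (k : ZMod p) = (-1) ^ (k - 1) := by
        calc ((c k : ZMod p)) * (k : ZMod p) = ((c k * k : ℕ) : ZMod p) := by push_cast; ring
          _ = ((Nat.choose (p - 1) (k - 1) : ℕ) : ZMod p) := by rw [hkc k hk]
          _ = (-1) ^ (k - 1) := choose_sub_one_zmod p hp _ (by omega)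
      have h3 : ((k : ZMod p)) ^ 2 * ((c k : ZMod p)) ^ 2 = 1 := by
        have := congrArg (· ^ 2) h2
        simp only [mul_pow] at this
        rw [mul_comm] at this
        rw [this, ← pow_mul, mul_comm (k-1) 2, pow_mul]
        simp
      exact eq_inv_of_mul_eq_one_left (by rw [mul_comm] at h3; exact h3)
    rw [Finset.sum_congr rfl h1]
    have h4 : ∑ k ∈ Finset.Ico 1 p, (((k : ZMod p)) ^ 2)⁻¹
        = ∑ k ∈ Finset.range p, (((k : ZMod p)) ^ 2)⁻¹ := by
      rw [Finset.range_eq_Ico, Finset.sum_eq_sum_Ico_succ_bot hp0]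
      simp
    rw [h4]
    have h5' : ∑ k ∈ Finset.range p, (((k : ZMod p)) ^ 2)⁻¹
        = ∑ x : ZMod p, (x ^ 2)⁻¹ := by
      refine Finset.sum_nbij' (fun k => (k : ZMod p)) (fun x => x.val) ?_ ?_ ?_ ?_ ?_
      · intro a _; exact Finset.mem_univ _
      · intro x _; exact Finset.mem_range.mpr (ZMod.val_lt x)
      · intro a ha; exact ZMod.val_natCast_of_lt (Finset.mem_range.mp ha)
      · intro x _; exact ZMod.natCast_zmod_val x
      · intro a _; rfl
    rw [h5']
    have h6 : ∑ x : ZMod p, (x ^ 2)⁻¹ = ∑ x : ZMod p, x ^ 2 := by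
      refine Fintype.sum_bijective Inv.inv inv_involutive.bijective _ _ fun x => ?_
      rw [inv_pow]
    rw [h6]
    have hcard : 2 < Fintype.card (ZMod p) - 1 := by rw [ZMod.card]; omega
    exact FiniteField.sum_pow_lt_card_sub_one (ZMod p) 2 hcard
  -- Vandermonde
  have h7 : Nat.choose (2 * p) p = ∑ k ∈ Finset.range (p + 1), (Nat.choose p k) ^ 2 := by
    rw [two_mul, Nat.add_choose_eq, Finset.Nat.sum_antidiagonal_eq_sum_range_succ_mk]
    refine Finset.sum_congr rfl fun k hk => ?_
    have hkp : k ≤ p := Nat.lt_succ_iff.mp (Finset.mem_range.mp hk)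
    show Nat.choose p k * Nat.choose p (p - k) = Nat.choose p k ^ 2
    rw [Nat.choose_symm hkp, sq]
  have h8 : ∑ k ∈ Finset.range (p + 1), (Nat.choose p k) ^ 2
      = 2 + ∑ k ∈ Finset.Ico 1 p, (Nat.choose p k) ^ 2 := by
    rw [Finset.sum_range_succ, Finset.range_eq_Ico, Finset.sum_eq_sum_Ico_succ_bot hp0]
    simp [Nat.choose_self, Nat.choose_zero_right]
    omega
  have h9 : ∑ k ∈ Finset.Ico 1 p, (Nat.choose p k) ^ 2
      = p ^ 2 * ∑ k ∈ Finset.Ico 1 p, (c k) ^ 2 := by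
    rw [Finset.mul_sum]
    refine Finset.sum_congr rfl fun k hk => ?_
    rw [hck k hk]; ring
  obtain ⟨T, hT⟩ := key
  have hval : Nat.choose (2 * p) p = 2 + p ^ 3 * T := by
    rw [h7, h8, h9, hT]; ring
  have hmod : Nat.choose (2 * p) p ≡ 2 [MOD p ^ 3] := by
    rw [hval]
    have h2 : (2 : ℕ) ≡ 2 + p ^ 3 * T [MOD p ^ 3] :=
      (Nat.modEq_iff_dvd' (Nat.le_add_right _ _)).mpr ⟨T, by omega⟩
    exact h2.symm
  have h10 : Nat.choose (2 * p) p = 2 * Nat.choose (2 * p - 1) (p - 1) := by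
    have e1 : 2 * p = (2 * p - 1) + 1 := by omega
    have e2 : p = (p - 1) + 1 := by omega
    have hsymm : Nat.choose (2 * p - 1) p = Nat.choose (2 * p - 1) (p - 1) := by
      have := Nat.choose_symm (by omega : p ≤ 2 * p - 1)
      have e3 : 2 * p - 1 - p = p - 1 := by omega
      rw [e3] at this
      exact this.symm
    calc Nat.choose (2 * p) p = Nat.choose ((2 * p - 1) + 1) ((p - 1) + 1) := by rw [← e1, ← e2]
      _ = Nat.choose (2 * p - 1) (p - 1) + Nat.choose (2 * p - 1) ((p - 1) + 1) :=
        Nat.choose_succ_succ _ _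
      _ = 2 * Nat.choose (2 * p - 1) (p - 1) := by rw [← e2, hsymm]; ring
  have hfin : 2 * Nat.choose (2 * p - 1) (p - 1) ≡ 2 * 1 [MOD p ^ 3] := by
    rw [← h10, mul_one]; exact hmod
  have hcop : Nat.Coprime (p ^ 3) 2 :=
    ((Nat.coprime_primes hp Nat.prime_two).mpr (by omega)).pow_left 3
  exact Nat.ModEq.cancel_left_of_coprime hcop hfin
end

section
/- For every prime p ≥ 5, the numerator of the harmonic sum H_{p−1} = 1 + 1/2 + ... + 1/(p−1) is divisible by p². -/
/-!
Pair `i` with `p - i`: in `ZMod (p ^ 2)`, where `p * p = 0`, one has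
`i⁻¹ + (p - i)⁻¹ = p * i⁻¹ * (p - i)⁻¹ = -p * i⁻²`, so `2 * H = -p * ∑ i⁻²`.
Multiplication by `p` only sees residues mod `p`, and `∑ i⁻² = ∑ x²` vanishes in `ZMod p`
for `p ≥ 5`. Hence `H ≡ 0` in `ZMod (p ^ 2)`; since the common denominator `(p - 1)!`
is prime to `p`, this congruence passes to the numerator of `H`.
-/

open Finset

theorem ZMod.sum_range_natCast {M : Type*} [AddCommMonoid M] (n : ℕ) [NeZero n]
    (g : ZMod n → M) : ∑ i ∈ range n, g i = ∑ x, g x :=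
  sum_nbij' (fun i => (i : ZMod n)) ZMod.val (fun _ _ => mem_univ _)
    (fun x _ => mem_range.2 x.val_lt) (fun _ hi => ZMod.val_natCast_of_lt (mem_range.1 hi))
    (fun x _ => ZMod.natCast_zmod_val x) (fun _ _ => rfl)

theorem FiniteField.sum_inv_pow_eq_zero {K : Type*} [Field K] [Fintype K] {k : ℕ}
    (hk : k < Fintype.card K - 1) : ∑ x : K, x⁻¹ ^ k = 0 :=
  (Equiv.sum_comp (Equiv.inv K) (· ^ k)).trans (sum_pow_lt_card_sub_one K k hk)

theorem ZMod.sum_range_inv_pow_eq_zero {p k : ℕ} [Fact p.Prime] (hk : k < p - 1)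
    (hk0 : k ≠ 0) : ∑ j ∈ range (p - 1), ((j + 1 : ℕ) : ZMod p)⁻¹ ^ k = 0 := by
  have h := FiniteField.sum_inv_pow_eq_zero (K := ZMod p) (k := k) (by rwa [ZMod.card])
  rw [← ZMod.sum_range_natCast] at h
  obtain ⟨m, rfl⟩ : ∃ m, p = m + 1 :=
    ⟨p - 1, (Nat.sub_add_cancel (Fact.out : p.Prime).one_le).symm⟩
  simpa [sum_range_succ', zero_pow hk0] using h

theorem ZMod.inv_add_inv_of_add_eq {n : ℕ} {e u v : ZMod n} (he : e * e = 0) (hu : IsUnit u)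
    (hv : IsUnit v) (huv : u + v = e) : u⁻¹ + v⁻¹ = -(e * u⁻¹ ^ 2) := by
  have hu' := ZMod.mul_inv_of_unit u hu
  have hv' := ZMod.mul_inv_of_unit v hv
  linear_combination
    (1 + e * u⁻¹) * (u⁻¹ * v⁻¹ * huv - u⁻¹ * hv' - v⁻¹ * hu') + u⁻¹ ^ 2 * v⁻¹ * he

theorem ZMod.natCast_mul_eq_zero_of_castHom_eq_zero (n : ℕ) {x : ZMod (n ^ 2)}
    (hx : ZMod.castHom (dvd_pow_self n two_ne_zero) (ZMod n) x = 0) :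
    (n : ZMod (n ^ 2)) * x = 0 := by
  obtain ⟨k, rfl⟩ := ZMod.intCast_surjective x
  rw [map_intCast, ZMod.intCast_zmod_eq_zero_iff_dvd] at hx
  obtain ⟨m, rfl⟩ := hx
  rw [← Int.cast_natCast, ← Int.cast_mul, ZMod.intCast_zmod_eq_zero_iff_dvd]
  exact ⟨m, by push_cast; ring⟩

theorem ZMod.castHom_inv_of_isUnit {m n : ℕ} (h : m ∣ n) {a : ZMod n} (ha : IsUnit a) :
    ZMod.castHom h (ZMod m) a⁻¹ = (ZMod.castHom h (ZMod m) a)⁻¹ := by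
  refine (ZMod.inv_eq_of_mul_eq_one _ _ _ ?_).symm
  rw [← map_mul, ZMod.mul_inv_of_unit a ha, map_one]

theorem ZMod.wolstenholme {p : ℕ} (hp : p.Prime) (h5 : 5 ≤ p) :
    ∑ j ∈ range (p - 1), ((j + 1 : ℕ) : ZMod (p ^ 2))⁻¹ = 0 := by
  have := Fact.mk hp
  have hunit : ∀ j, 0 < j → j < p → IsUnit (j : ZMod (p ^ 2)) := fun j hj0 hjp =>
    (ZMod.isUnit_iff_coprime _ _).2 ((Nat.coprime_of_lt_prime hj0.ne' hjp hp).symm.pow_right 2)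
  have hpp : (p : ZMod (p ^ 2)) * p = 0 := by
    rw [← sq]; exact_mod_cast ZMod.natCast_self (p ^ 2)
  set a : ℕ → ZMod (p ^ 2) := fun j => ((j + 1 : ℕ) : ZMod (p ^ 2))⁻¹
  have hpair : ∀ j ∈ range (p - 1), a j + a (p - 1 - 1 - j) = -(p * a j ^ 2) := by
    intro j hj
    have hj := mem_range.1 hj
    exact ZMod.inv_add_inv_of_add_eq hpp (hunit _ (by omega) (by omega))
      (hunit _ (by omega) (by omega)) (by rw [← Nat.cast_add]; congr 1; omega)
  have hsq : (p : ZMod (p ^ 2)) * ∑ j ∈ range (p - 1), a j ^ 2 = 0 := by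
    refine ZMod.natCast_mul_eq_zero_of_castHom_eq_zero p ?_
    rw [map_sum]
    refine (sum_congr rfl fun j hj => ?_).trans
      (ZMod.sum_range_inv_pow_eq_zero (p := p) (k := 2) (by omega) two_ne_zero)
    have hj := mem_range.1 hj
    rw [map_pow, ZMod.castHom_inv_of_isUnit _ (hunit _ (by omega) (by omega)), map_natCast]
  have h2 : IsUnit (2 : ZMod (p ^ 2)) := by exact_mod_cast hunit 2 (by omega) (by omega)
  rw [← h2.mul_right_eq_zero, two_mul]
  nth_rewrite 2 [← sum_range_reflect]
  rw [← sum_add_distrib, sum_congr rfl hpair, sum_neg_distrib, ← mul_sum, hsq, neg_zero]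

theorem Rat.dvd_num_of_mul_eq {q : ℚ} {n d a : ℤ} (hnd : IsCoprime n d) (hna : n ∣ a)
    (h : q * d = a) : n ∣ q.num := by
  have key : q.num * d = a * q.den := by
    have : (q.num * d : ℚ) = a * q.den := by rw [← Rat.mul_den_eq_num, ← h]; ring
    exact_mod_cast this
  exact hnd.dvd_of_dvd_mul_right (key ▸ hna.mul_right _)

theorem Rat.natCast_dvd_num_sum_inv {ι : Type*} (s : Finset ι) (f : ι → ℕ) {n : ℕ}
    (hf : ∀ i ∈ s, (f i).Coprime n) (h : ∑ i ∈ s, (f i : ZMod n)⁻¹ = 0) :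
    (n : ℤ) ∣ (∑ i ∈ s, (f i : ℚ)⁻¹).num := by
  classical
  rcases eq_or_ne n 1 with rfl | hn
  · simp
  have hf0 : ∀ i ∈ s, f i ≠ 0 := fun i hi h0 => hn ((Nat.coprime_zero_left _).1 (h0 ▸ hf i hi))
  refine Rat.dvd_num_of_mul_eq (d := ((∏ i ∈ s, f i : ℕ) : ℤ))
    (a := ((∑ i ∈ s, ∏ j ∈ s.erase i, f j : ℕ) : ℤ)) ?_ ?_ ?_
  · exact Nat.isCoprime_iff_coprime.2 (Nat.coprime_prod_right_iff.2 fun i hi => (hf i hi).symm)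
  · refine Int.natCast_dvd_natCast.2 ((ZMod.natCast_eq_zero_iff _ _).1 ?_)
    have hterm : ∀ i ∈ s, ((∏ j ∈ s.erase i, f j : ℕ) : ZMod n) =
        (∏ j ∈ s, f j : ℕ) * (f i : ZMod n)⁻¹ := by
      intro i hi
      rw [← mul_prod_erase s f hi, Nat.cast_mul, mul_right_comm,
        ZMod.mul_inv_of_unit _ ((ZMod.isUnit_iff_coprime _ _).2 (hf i hi)), one_mul]
    rw [Nat.cast_sum, sum_congr rfl hterm, ← mul_sum, h, mul_zero]
  · push_cast
    rw [sum_mul]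
    refine sum_congr rfl fun i hi => ?_
    rw [← mul_prod_erase s (fun j => (f j : ℚ)) hi,
      inv_mul_cancel_left₀ (by exact_mod_cast hf0 i hi)]

theorem wolstenholme_harmonic (p : ℕ) (hp : p.Prime) (h5 : 5 ≤ p) :
    (p : ℤ) ^ 2 ∣ (∑ i ∈ Finset.range (p - 1), (1 : ℚ) / (i + 1)).num := by
  have hcop : ∀ j ∈ range (p - 1), (j + 1).Coprime (p ^ 2) := fun j hj =>
    (Nat.coprime_of_lt_prime j.succ_ne_zero (by have := mem_range.1 hj; omega) hp).symm.pow_right 2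
  have h := Rat.natCast_dvd_num_sum_inv _ _ hcop (ZMod.wolstenholme hp h5)
  push_cast at h
  simpa only [one_div] using h
end

section
/- For a prime p ≥ 5, p² divides the numerator of H_{p−1} if and only if C(2p−1, p−1) ≡ 1 (mod p³). -/
open Polynomial Finset Nat

lemma myCoeffZero {R ι : Type*} [CommRing R] (c : ι → R) (F : Finset ι) :
    (∏ i ∈ F, (X + C (c i))).coeff 0 = ∏ i ∈ F, c i := by
  rw [coeff_zero_eq_eval_zero, eval_prod]
  simp

lemma myCoeffOne {R ι : Type*} [CommRing R] [DecidableEq ι] (c : ι → R) (F : Finset ι) :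
    (∏ i ∈ F, (X + C (c i))).coeff 1 = ∑ i ∈ F, ∏ j ∈ F.erase i, c j := by
  induction F using Finset.induction with
  | empty => simp [Polynomial.coeff_one]
  | @insert a F ha ih =>
    rw [Finset.prod_insert ha, Finset.sum_insert ha, add_mul, coeff_add, coeff_X_mul,
      coeff_C_mul, myCoeffZero, ih, Finset.erase_insert ha, Finset.mul_sum]
    congr 1
    refine Finset.sum_congr rfl fun i hi => ?_
    rw [Finset.erase_insert_of_ne (by rintro rfl; exact ha hi),
      Finset.prod_insert (fun h => ha (Finset.mem_of_mem_erase h))]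

lemma prod_univ_X_sub_C (p : ℕ) [Fact p.Prime] (hp5 : 5 ≤ p) :
    ∏ a : ZMod p, (X - C a) = X ^ p - X := by
  have hq : Fintype.card (ZMod p) = p := ZMod.card p
  have h1 : (1:ℕ) < p := by omega
  have hcast : (1 : WithBot ℕ) < (p : ℕ) := by exact_mod_cast h1
  have hmonic : (X ^ p - X : (ZMod p)[X]).Monic :=
    monic_X_pow_sub (degree_X_le.trans_lt hcast)
  have hroots : (X ^ p - X : (ZMod p)[X]).roots = Finset.univ.val := by
    have := FiniteField.roots_X_pow_card_sub_X (ZMod p)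
    rwa [hq] at this
  have hsplits : Splits (X ^ p - X : (ZMod p)[X]) := by
    rw [splits_iff_card_roots, hroots, FiniteField.X_pow_card_sub_X_natDegree_eq _ h1]
    simpa using hq
  have := hsplits.eq_prod_roots_of_monic hmonic
  rw [hroots] at this
  rw [Finset.prod_eq_multiset_prod, this]

lemma prod_nonzero_X_add_C (p : ℕ) [Fact p.Prime] (hp5 : 5 ≤ p) :
    ∏ a ∈ Finset.univ.erase (0 : ZMod p), (X + C a) = X ^ (p - 1) - 1 := by
  have hneg : ∏ a ∈ Finset.univ.erase (0 : ZMod p), (X + C a)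
      = ∏ a ∈ Finset.univ.erase (0 : ZMod p), (X - C a) := by
    refine Finset.prod_nbij' (fun a => -a) (fun a => -a) ?_ ?_ ?_ ?_ ?_
    · intro a ha
      simp only [Finset.mem_erase, Finset.mem_univ, and_true] at ha ⊢
      simpa using ha
    · intro a ha
      simp only [Finset.mem_erase, Finset.mem_univ, and_true] at ha ⊢
      simpa using ha
    · intro a _; simp
    · intro a _; simp
    · intro a _; simp [sub_neg_eq_add]
  have hfull := Finset.mul_prod_erase Finset.univ (fun a : ZMod p => X - C a)
    (Finset.mem_univ 0)
  rw [prod_univ_X_sub_C p hp5] at hfull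
  rw [hneg]
  have hX : (X : (ZMod p)[X]) ≠ 0 := X_ne_zero
  apply mul_left_cancel₀ hX
  simp only [map_zero, sub_zero] at hfull
  have hpow : (X : (ZMod p)[X]) ^ p = X * X ^ (p - 1) := by
    rw [← _root_.pow_succ']
    congr 1
    omega
  rw [hfull, hpow, mul_sub, mul_one]

theorem harmonic_iff_binom (p : ℕ) (hp : p.Prime) (h5 : 5 ≤ p) :
    (p : ℤ) ^ 2 ∣ (∑ i ∈ Finset.range (p - 1), (1 : ℚ) / (i + 1)).num ↔
      Nat.choose (2 * p - 1) (p - 1) ≡ 1 [MOD p ^ 3] := by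
  haveI : Fact p.Prime := ⟨hp⟩
  have hπ : Prime ((p : ℕ) : ℤ) := Nat.prime_iff_prime_int.mp hp
  set n := p - 1 with hn
  have hn4 : 4 ≤ n := by omega
  set F : Finset ℕ := Finset.Icc 1 n with hF
  set P : Polynomial ℤ := ∏ i ∈ F, (X + C ((i : ℕ) : ℤ)) with hP
  -- factorial facts
  have hfacN : ∏ i ∈ F, i = n ! := by
    rw [hF, ← Finset.Ico_add_one_right_eq_Icc]
    exact Finset.prod_Ico_id_eq_factorial n
  have hpn : ¬ ((p : ℕ) : ℤ) ∣ ((n ! : ℕ) : ℤ) := by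
    rw [Int.natCast_dvd_natCast]
    intro h
    have := (Nat.Prime.dvd_factorial hp).mp h
    omega
  -- coeff 0
  have hc0 : P.coeff 0 = ((n ! : ℕ) : ℤ) := by
    rw [hP, myCoeffZero, ← Nat.cast_prod, hfacN]
  -- map to ZMod p
  have hmap : P.map (Int.castRingHom (ZMod p)) = X ^ n - 1 := by
    rw [hP, Polynomial.map_prod]
    have h1 : ∀ i ∈ F, (X + C ((i : ℕ) : ℤ)).map (Int.castRingHom (ZMod p))
        = X + C ((i : ℕ) : ZMod p) := by
      intro i _
      simp
    rw [Finset.prod_congr rfl h1, hn, ← prod_nonzero_X_add_C p h5]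
    refine Finset.prod_nbij' (fun i => ((i : ℕ) : ZMod p)) (fun b => b.val) ?_ ?_ ?_ ?_ ?_
    · intro i hi
      rw [hF, Finset.mem_Icc] at hi
      simp only [Finset.mem_erase, Finset.mem_univ, and_true]
      rw [Ne, ZMod.natCast_eq_zero_iff]
      intro hdvd
      have := Nat.le_of_dvd (by omega) hdvd
      omega
    · intro b hb
      simp only [Finset.mem_erase, Finset.mem_univ, and_true] at hb
      have h1 : b.val ≠ 0 := fun h => hb ((ZMod.val_eq_zero b).mp h)
      have h2 : b.val < p := ZMod.val_lt b
      rw [hF, Finset.mem_Icc, hn]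
      change 1 ≤ b.val ∧ b.val ≤ p - 1
      omega
    · intro i hi
      rw [hF, Finset.mem_Icc] at hi
      exact ZMod.val_cast_of_lt (by omega)
    · intro b _
      exact ZMod.natCast_rightInverse b
    · intro i _
      rfl
  have key_coeff : ∀ k, k ≠ 0 → k ≠ n → ((p : ℕ) : ℤ) ∣ P.coeff k := by
    intro k hk0 hkn
    have h2 : (P.map (Int.castRingHom (ZMod p))).coeff k = 0 := by
      rw [hmap]
      simp [Polynomial.coeff_X_pow, Polynomial.coeff_one, hkn, hk0]
    rw [Polynomial.coeff_map] at h2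
    exact (ZMod.intCast_zmod_eq_zero_iff_dvd _ p).mp h2
  have hdvd1 : ((p : ℕ) : ℤ) ∣ P.coeff 1 := key_coeff 1 (by omega) (by omega)
  have hdvd2 : ((p : ℕ) : ℤ) ∣ P.coeff 2 := key_coeff 2 (by omega) (by omega)
  -- degree bound and expansion
  have hdeg : P.natDegree < n + 1 := by
    have h1 : P.natDegree ≤ ∑ i ∈ F, (X + C ((i : ℕ) : ℤ)).natDegree := by
      rw [hP]; exact Polynomial.natDegree_prod_le _ _
    have h2 : ∑ i ∈ F, (X + C ((i : ℕ) : ℤ)).natDegree = F.card := by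
      rw [Finset.sum_congr rfl fun i _ => natDegree_X_add_C ((i : ℕ) : ℤ)]
      simp
    have h3 : F.card = n := by rw [hF, Nat.card_Icc]; omega
    omega
  have hexp : ((p : ℕ) : ℤ) ^ 3 ∣
      P.eval ((p : ℕ) : ℤ) - (P.coeff 0 + (p : ℤ) * P.coeff 1 + (p : ℤ) ^ 2 * P.coeff 2) := by
    rw [Polynomial.eval_eq_sum_range' hdeg]
    have hsplit : ∑ i ∈ Finset.range (n + 1), P.coeff i * ((p : ℕ) : ℤ) ^ i
        = (∑ i ∈ Finset.range 3, P.coeff i * ((p : ℕ) : ℤ) ^ i)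
          + ∑ i ∈ Finset.Ico 3 (n + 1), P.coeff i * ((p : ℕ) : ℤ) ^ i := by
      rw [Finset.range_eq_Ico]
      exact (Finset.sum_Ico_consecutive _ (by omega : (0:ℕ) ≤ 3) (by omega : 3 ≤ n + 1)).symm
    have h3 : ∑ i ∈ Finset.range 3, P.coeff i * ((p : ℕ) : ℤ) ^ i
        = P.coeff 0 + (p : ℤ) * P.coeff 1 + (p : ℤ) ^ 2 * P.coeff 2 := by
      rw [Finset.sum_range_succ, Finset.sum_range_succ, Finset.sum_range_one]
      ring
    rw [hsplit, h3, add_sub_cancel_left]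
    exact Finset.dvd_sum fun i hi =>
      Dvd.dvd.mul_left (pow_dvd_pow _ (Finset.mem_Ico.mp hi).1) _
  -- binomial identity over ℕ
  have hprod_shift : ∏ i ∈ F, (p + i) = ∏ i ∈ Finset.Ioc p (2 * p - 1), i := by
    refine Finset.prod_nbij' (fun i => p + i) (fun j => j - p) ?_ ?_ ?_ ?_ ?_ <;>
      intro a ha <;>
      simp only [hF, Finset.mem_Icc, Finset.mem_Ioc] at * <;> omega
  have hIoc0 : ∀ m : ℕ, ∏ i ∈ Finset.Ioc 0 m, i = m ! := by
    intro m
    have h : Finset.Ioc 0 m = Finset.Ico 1 (m + 1) := by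
      ext a; simp [Finset.mem_Ioc, Finset.mem_Ico]; omega
    rw [h]
    exact Finset.prod_Ico_id_eq_factorial m
  have hsplitIoc : (p !) * ∏ i ∈ Finset.Ioc p (2 * p - 1), i = (2 * p - 1)! := by
    rw [← hIoc0 p, ← hIoc0 (2 * p - 1)]
    exact Finset.prod_Ioc_consecutive _ (Nat.zero_le p) (by omega)
  have hCfac : Nat.choose (2 * p - 1) (p - 1) * (p - 1)! * p ! = (2 * p - 1)! := by
    have h := Nat.choose_mul_factorial_mul_factorial (show p - 1 ≤ 2 * p - 1 by omega)
    rwa [show 2 * p - 1 - (p - 1) = p by omega] at h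
  have hkey : Nat.choose (2 * p - 1) (p - 1) * n ! = ∏ i ∈ F, (p + i) := by
    have hppos : 0 < p ! := Nat.factorial_pos p
    apply Nat.eq_of_mul_eq_mul_right hppos
    calc Nat.choose (2 * p - 1) (p - 1) * n ! * p ! = (2 * p - 1)! := by
          rw [hn]; exact hCfac
      _ = p ! * ∏ i ∈ Finset.Ioc p (2 * p - 1), i := hsplitIoc.symm
      _ = (∏ i ∈ F, (p + i)) * p ! := by rw [hprod_shift]; ring
  have heval : P.eval ((p : ℕ) : ℤ) = ((Nat.choose (2 * p - 1) (p - 1) * n ! : ℕ) : ℤ) := by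
    rw [hkey, hP, Polynomial.eval_prod]
    push_cast
    simp
  -- binomial side iff
  have hbinom : (Nat.choose (2 * p - 1) (p - 1) ≡ 1 [MOD p ^ 3]) ↔ (p : ℤ) ^ 2 ∣ P.coeff 1 := by
    rw [Nat.modEq_iff_dvd]
    push_cast
    rw [show ((1 : ℤ) - (Nat.choose (2 * p - 1) (p - 1) : ℤ))
        = -((Nat.choose (2 * p - 1) (p - 1) : ℤ) - 1) by ring, dvd_neg]
    have copn3 : IsCoprime (((p : ℕ) : ℤ) ^ 3) ((n ! : ℕ) : ℤ) :=
      IsCoprime.pow_left (hπ.coprime_iff_not_dvd.mpr hpn)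
    have step1 : (p : ℤ) ^ 3 ∣ ((Nat.choose (2 * p - 1) (p - 1) : ℤ) - 1) ↔
        (p : ℤ) ^ 3 ∣ ((Nat.choose (2 * p - 1) (p - 1) : ℤ) - 1) * ((n ! : ℕ) : ℤ) :=
      ⟨fun h => h.mul_right _, fun h => copn3.dvd_of_dvd_mul_right h⟩
    rw [step1]
    have step2 : ((Nat.choose (2 * p - 1) (p - 1) : ℤ) - 1) * ((n ! : ℕ) : ℤ)
        = (P.eval ((p : ℕ) : ℤ)
            - (P.coeff 0 + (p : ℤ) * P.coeff 1 + (p : ℤ) ^ 2 * P.coeff 2))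
          + ((p : ℤ) * P.coeff 1 + (p : ℤ) ^ 2 * P.coeff 2) := by
      rw [heval, hc0]
      push_cast
      ring
    rw [step2, dvd_add_right hexp]
    obtain ⟨t, ht⟩ := hdvd2
    have step3 : (p : ℤ) * P.coeff 1 + (p : ℤ) ^ 2 * P.coeff 2
        = (p : ℤ) * (P.coeff 1 + (p : ℤ) * ((p:ℤ) * t)) := by rw [← ht]; ring
    rw [step3, show ((p:ℕ):ℤ) ^ 3 = ((p:ℕ):ℤ) * ((p:ℕ):ℤ) ^ 2 by ring, mul_dvd_mul_iff_left (by exact_mod_cast hp.ne_zero : ((p:ℕ):ℤ) ≠ 0)]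
    have step4 : (p : ℤ) ^ 2 ∣ (p : ℤ) * ((p:ℤ) * t) := ⟨t, by ring⟩
    constructor
    · intro h
      have := dvd_sub h step4
      simpa using this
    · intro h
      exact dvd_add h step4
  -- harmonic side
  set q : ℚ := ∑ i ∈ Finset.range n, (1 : ℚ) / (i + 1) with hq
  have hprodQ : ∏ j ∈ F, (j : ℚ) = ((n ! : ℕ) : ℚ) := by
    rw [← Nat.cast_prod, hfacN]
  have hqval : q * ((n ! : ℕ) : ℚ) = ((P.coeff 1 : ℤ) : ℚ) := by
    rw [hP, myCoeffOne]
    push_cast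
    have hre : q = ∑ i ∈ F, 1 / (i : ℚ) := by
      rw [hq, hF, ← Finset.Ico_add_one_right_eq_Icc, Finset.sum_Ico_eq_sum_range]
      simp [add_comm]
    rw [hre, Finset.sum_mul]
    refine Finset.sum_congr rfl fun i hi => ?_
    have hi' := hi
    rw [hF, Finset.mem_Icc] at hi'
    have hine : (i : ℚ) ≠ 0 := Nat.cast_ne_zero.mpr (by omega)
    rw [← hprodQ, ← Finset.mul_prod_erase F (fun j => (j : ℚ)) hi,
      one_div, inv_mul_cancel_left₀ hine]
  have hdenne : ((q.den : ℚ) : ℚ) ≠ 0 := Nat.cast_ne_zero.mpr q.den_nz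
  have hrel : q.num * ((n ! : ℕ) : ℤ) = P.coeff 1 * (q.den : ℤ) := by
    have h1 : ((q.num * ((n ! : ℕ) : ℤ) : ℤ) : ℚ) = ((P.coeff 1 * (q.den : ℤ) : ℤ) : ℚ) := by
      push_cast
      have hnum : (q.num : ℚ) = q * (q.den : ℚ) := by
        have h := Rat.num_div_den q
        rw [div_eq_iff hdenne] at h
        exact h
      rw [hnum, ← hqval]
      push_cast
      ring
    exact_mod_cast h1
  have hdenn : (q.den : ℤ) ∣ ((n ! : ℕ) : ℤ) := by
    have hdvd : (q.den : ℤ) ∣ q.num * ((n ! : ℕ) : ℤ) := by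
      rw [hrel]; exact dvd_mul_left _ _
    have hcop : IsCoprime (q.den : ℤ) q.num := by
      rw [Int.isCoprime_iff_gcd_eq_one]
      simpa [Int.gcd, Nat.coprime_comm] using q.reduced
    exact hcop.dvd_of_dvd_mul_left hdvd
  have hpden : ¬ ((p : ℕ) : ℤ) ∣ (q.den : ℤ) := fun h => hpn (h.trans hdenn)
  have hcop2 : IsCoprime (((p : ℕ) : ℤ) ^ 2) (q.den : ℤ) :=
    IsCoprime.pow_left (hπ.coprime_iff_not_dvd.mpr hpden)
  have hcopn2 : IsCoprime (((p : ℕ) : ℤ) ^ 2) ((n ! : ℕ) : ℤ) :=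
    IsCoprime.pow_left (hπ.coprime_iff_not_dvd.mpr hpn)
  have hharm : (p : ℤ) ^ 2 ∣ q.num ↔ (p : ℤ) ^ 2 ∣ P.coeff 1 := by
    constructor
    · intro h
      have h2 : (p : ℤ) ^ 2 ∣ P.coeff 1 * (q.den : ℤ) := hrel ▸ h.mul_right _
      exact hcop2.dvd_of_dvd_mul_right h2
    · intro h
      have h2 : (p : ℤ) ^ 2 ∣ q.num * ((n ! : ℕ) : ℤ) := hrel.symm ▸ h.mul_right _
      exact hcopn2.dvd_of_dvd_mul_right h2
  exact hharm.trans hbinom.symm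
end

section
/- For a prime p and k ≥ 1, let Λ(p,k) be the set of nondecreasing tuples (λ₁,…,λ_{kp}) with 1 ≤ λ₁ ≤ ⋯ ≤ λ_{kp} ≤ p and ∑λᵢ ≡ 0 (mod p). Then p · |Λ(p,k)| = (p − 1) + C((k+1)p − 1, p − 1). -/
open Polynomial Finset

namespace CRPP

lemma smono_gap {n : ℕ} {e : Fin n → ℕ} (he : StrictMono e) :
    ∀ (d : ℕ) (i j : Fin n), i.val + d = j.val → e i + d ≤ e j := by
  intro d
  induction d with
  | zero =>
    intro i j h
    have : i = j := Fin.ext (by omega)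
    subst this; omega
  | succ d ih =>
    intro i j h
    have hj1 : j.val - 1 < n := by omega
    have h1 : e i + d ≤ e ⟨j.val - 1, hj1⟩ := ih i _ (by simp; omega)
    have h2 : e ⟨j.val - 1, hj1⟩ < e j := he (by simp [Fin.lt_def]; omega)
    omega

/-- encoding of a monotone bounded tuple as a subset -/
def enc (n : ℕ) (f : Fin n → ℕ) : Finset ℕ :=
  image (fun j : Fin n => (f j - 1) + j.val) univ

def target (p n : ℕ) : Finset (Finset ℕ) :=
  ((range (n + (p - 1))).powersetCard n).filter
    (fun S => (S.sum id + n + (p - (n * (n - 1) / 2) % p)) % p = 0)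

variable {p n : ℕ}

lemma enc_strictMono {f : Fin n → ℕ} (hmono : Monotone f) (hb : ∀ j, 1 ≤ f j ∧ f j ≤ p) :
    StrictMono (fun j : Fin n => (f j - 1) + j.val) := by
  intro i j hij
  have h1 : f i ≤ f j := hmono hij.le
  have h2 : 1 ≤ f i := (hb i).1
  have h3 : i.val < j.val := hij
  simp only []
  omega

lemma enc_card {f : Fin n → ℕ} (hmono : Monotone f) (hb : ∀ j, 1 ≤ f j ∧ f j ≤ p) :
    (enc n f).card = n := by
  rw [enc, card_image_of_injective _ (enc_strictMono hmono hb).injective, card_univ,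
    Fintype.card_fin]

lemma enc_mem (hn : 0 < n) {f : Fin n → ℕ} (hmono : Monotone f)
    (hb : ∀ j, 1 ≤ f j ∧ f j ≤ p) :
    enc n f ∈ (range (n + (p - 1))).powersetCard n := by
  rw [mem_powersetCard]
  refine ⟨fun x hx => ?_, enc_card hmono hb⟩
  simp only [enc, mem_image, mem_univ, true_and] at hx
  obtain ⟨j, rfl⟩ := hx
  have h1 := (hb j).2
  have h2 := (hb j).1
  have h3 := j.isLt
  rw [mem_range]
  omega

lemma enc_sum {f : Fin n → ℕ} (hmono : Monotone f) (hb : ∀ j, 1 ≤ f j ∧ f j ≤ p) :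
    (enc n f).sum id + n = (∑ j, f j) + n * (n - 1) / 2 := by
  rw [enc, sum_image (fun i _ j _ h => (enc_strictMono hmono hb).injective h)]
  have h1 : (∑ j : Fin n, id ((f j - 1) + j.val)) + n
      = ∑ j : Fin n, (f j + j.val) := by
    have h2 : ∑ j : Fin n, (f j + j.val)
        = (∑ j : Fin n, id ((f j - 1) + j.val)) + ∑ _j : Fin n, 1 := by
      rw [← Finset.sum_add_distrib]
      exact Finset.sum_congr rfl fun j _ => by have := (hb j).1; simp; omega
    rw [h2]; simp
  rw [h1, Finset.sum_add_distrib]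
  congr 1
  rw [Fin.sum_univ_eq_sum_range (fun i => i), Finset.sum_range_id]

noncomputable def dec (S : Finset ℕ) (hcard : S.card = n) : Fin n → ℕ :=
  fun j => S.orderEmbOfFin hcard j + 1 - j.val

lemma dec_le (S : Finset ℕ) (hcard : S.card = n) (j : Fin n) :
    j.val ≤ S.orderEmbOfFin hcard j := by
  have h0 : (0 : ℕ) < n := j.pos
  have := smono_gap (S.orderEmbOfFin hcard).strictMono j.val ⟨0, h0⟩ j (by simp)
  omega

lemma dec_props (hp : 1 ≤ p) (hn : 0 < n) {S : Finset ℕ}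
    (hS : S ∈ (range (n + (p - 1))).powersetCard n) (hcard : S.card = n) :
    Monotone (dec S hcard) ∧ (∀ j, 1 ≤ dec S hcard j ∧ dec S hcard j ≤ p) := by
  obtain ⟨hsub, -⟩ := mem_powersetCard.mp hS
  have hlast : ∀ j : Fin n, S.orderEmbOfFin hcard j + (n - 1 - j.val) + 1 ≤ n + (p - 1) := by
    intro j
    have hj := j.isLt
    have h1 := smono_gap (S.orderEmbOfFin hcard).strictMono (n - 1 - j.val) j ⟨n - 1, by omega⟩
      (by simp; omega)
    have h2 : S.orderEmbOfFin hcard ⟨n - 1, by omega⟩ ∈ range (n + (p - 1)) :=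
      hsub (Finset.orderEmbOfFin_mem _ _ _)
    rw [mem_range] at h2
    omega
  constructor
  · intro i j hij
    have h1 := smono_gap (S.orderEmbOfFin hcard).strictMono (j.val - i.val) i j (by omega)
    have h2 := dec_le S hcard i
    have hij' : i.val ≤ j.val := hij
    simp only [dec]
    omega
  · intro j
    have h1 := dec_le S hcard j
    have h2 := hlast j
    have h3 := j.isLt
    simp only [dec]
    omega

lemma dec_enc (hn : 0 < n) {S : Finset ℕ}
    (hS : S ∈ (range (n + (p - 1))).powersetCard n) (hcard : S.card = n) :
    enc n (dec S hcard) = S := by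
  have key : (fun j : Fin n => (dec S hcard j - 1) + j.val)
      = fun j => S.orderEmbOfFin hcard j := by
    funext j
    have h1 := dec_le S hcard j
    simp only [dec]
    omega
  rw [enc, key]
  apply Finset.coe_injective
  rw [Finset.coe_image, Finset.coe_univ, Set.image_univ]
  exact Finset.range_orderEmbOfFin S hcard

lemma enc_dec (hn : 0 < n) {f : Fin n → ℕ} (hmono : Monotone f)
    (hb : ∀ j, 1 ≤ f j ∧ f j ≤ p) (hcard : (enc n f).card = n) :
    dec (enc n f) hcard = f := by
  have hmem : ∀ j : Fin n, (f j - 1) + j.val ∈ enc n f := fun j =>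
    Finset.mem_image.mpr ⟨j, mem_univ _, rfl⟩
  have huniq := Finset.orderEmbOfFin_unique hcard hmem (enc_strictMono hmono hb)
  funext j
  have h1 : (enc n f).orderEmbOfFin hcard j = (f j - 1) + j.val := by
    rw [← huniq]
  have h2 := (hb j).1
  simp only [dec, h1]
  omega


lemma card_subtype (hp : 2 ≤ p) (hn : 0 < n) :
    Nat.card {f : Fin n → ℕ // Monotone f ∧ (∀ j, 1 ≤ f j ∧ f j ≤ p) ∧ (∑ j, f j) % p = 0}
      = (target p n).card := by
  classical
  have hp1 : 1 ≤ p := by omega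
  set D := n * (n - 1) / 2 with hD
  set r0 := D % p with hr0def
  have hr0 : r0 ≤ D := Nat.mod_le _ _
  have hr0p : r0 < p := Nat.mod_lt _ (by omega)
  have hdvd : p ∣ (D - r0) := Nat.dvd_sub_mod _
  have key : ∀ a : ℕ, (a + (D - r0) + p) % p = 0 ↔ a % p = 0 := by
    intro a
    obtain ⟨t, ht⟩ := hdvd
    rw [show a + (D - r0) + p = a + p * (t + 1) by rw [ht]; ring, Nat.add_mul_mod_self_left]
  have hcard' : ∀ {S : Finset ℕ}, S ∈ target p n → S.card = n := fun hS =>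
    (mem_powersetCard.mp (mem_filter.mp hS).1).2
  have e : {f : Fin n → ℕ // Monotone f ∧ (∀ j, 1 ≤ f j ∧ f j ≤ p) ∧ (∑ j, f j) % p = 0}
      ≃ {S // S ∈ target p n} := by
    refine ⟨fun x => ⟨enc n x.1, ?_⟩, fun y => ⟨dec y.1 (hcard' y.2), ?_⟩, ?_, ?_⟩
    · obtain ⟨f, hmono, hb, hs⟩ := x
      rw [target, mem_filter]
      refine ⟨enc_mem hn hmono hb, ?_⟩
      have hsum := enc_sum hmono hb
      rw [show (enc n f).sum id + n + (p - r0) = (∑ j, f j) + (D - r0) + p by omega]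
      exact (key _).mpr hs
    · have hpc := (mem_filter.mp y.2).1
      have hcond := (mem_filter.mp y.2).2
      obtain ⟨hmono, hb⟩ := dec_props hp1 hn hpc (hcard' y.2)
      refine ⟨hmono, hb, ?_⟩
      have hdenc := dec_enc hn hpc (hcard' y.2)
      have hsum := enc_sum hmono hb
      rw [hdenc] at hsum
      rw [show y.1.sum id + n + (p - r0)
        = (∑ j, dec y.1 (hcard' y.2) j) + (D - r0) + p by omega] at hcond
      exact (key _).mp hcond
    · intro x
      exact Subtype.ext (enc_dec hn x.2.1 x.2.2.1 _)
    · intro y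
      exact Subtype.ext (dec_enc hn (mem_filter.mp y.2).1 _)
  rw [Nat.card_congr e, Nat.card_eq_finsetCard]


lemma coeff_pow_low {K : Type*} [CommRing K] (a : K) (m q j : ℕ) (hj : j < q) :
    ((X ^ q + C a) ^ m).coeff j = if j = 0 then a ^ m else 0 := by
  rw [add_pow, Polynomial.finset_sum_coeff]
  have hterm : ∀ i : ℕ, (((X:K[X]) ^ q) ^ i * C a ^ (m - i) * (m.choose i : K[X])).coeff j
      = if j = q * i then a ^ (m - i) * (m.choose i : K) else 0 := by
    intro i
    rw [← pow_mul, ← C_pow, ← Polynomial.C_eq_natCast, mul_assoc, ← C_mul,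
      Polynomial.coeff_mul_C, Polynomial.coeff_X_pow, ite_mul, one_mul, zero_mul]
  rw [Finset.sum_congr rfl fun i _ => hterm i]
  rw [Finset.sum_eq_single_of_mem 0 (by simp)]
  · simp
  · intro i hi hi0
    rw [if_neg]
    intro hji
    have : q ≤ q * i := Nat.le_mul_of_pos_right q (by omega)
    omega

lemma prod_period {K : Type*} [CommRing K] (u : K) (q : ℕ) (hu : u ^ q = 1) (m : ℕ) :
    ∏ a ∈ range (m * q), (X + C (u ^ a)) = (∏ a ∈ range q, (X + C (u ^ a))) ^ m := by
  induction m with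
  | zero => simp
  | succ m ih =>
    rw [show (m + 1) * q = m * q + q by ring, Finset.prod_range_add, ih, pow_succ]
    congr 1
    refine Finset.prod_congr rfl fun i _ => ?_
    congr 2
    rw [pow_add, mul_comm m q, pow_mul, hu, one_pow, one_mul]


lemma sum_primroot (p k : ℕ) (hp : p.Prime) (hk : 1 ≤ k) {u : ℂ}
    (hu : IsPrimitiveRoot u p) :
    ∑ S ∈ (range (k * p + (p - 1))).powersetCard (k * p),
      u ^ (S.sum id + k * p + (p - ((k * p) * (k * p - 1) / 2) % p)) = 1 := by
  have hp2 := hp.two_le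
  set n := k * p with hn
  set L := n + (p - 1) with hL
  have hL1 : L + 1 = (k + 1) * p := by rw [hL, hn]; have : (k+1)*p = k*p + p := by ring
                                       omega
  have hup : u ^ p = 1 := hu.pow_eq_one
  have hdvdpow : ∀ m : ℕ, p ∣ m → u ^ m = 1 := by
    rintro m ⟨t, rfl⟩
    rw [pow_mul, hup, one_pow]
  set P := ∏ a ∈ range L, (X + C (u ^ a)) with hP
  set A : ℂ := (-1) ^ p with hA
  set B : ℂ := (-A) ^ (k + 1) with hB
  have hPmul : P * (X + C (u ^ L)) = (X ^ p - C A) ^ (k + 1) := by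
    rw [hP, ← Finset.prod_range_succ (fun a => X + C (u ^ a)), hL1,
      prod_period u p hup (k + 1)]
    congr 1
    have hXp := X_pow_sub_C_eq_prod hu hp.pos (show (-1 : ℂ) ^ p = A from rfl)
    rw [← hXp.symm]
    refine Finset.prod_congr rfl fun i _ => ?_
    rw [mul_neg_one, map_neg, sub_neg_eq_add]
  have hRHS : ∀ j, j < p → ((X ^ p - C A) ^ (k + 1)).coeff j = if j = 0 then B else 0 := by
    intro j hj
    rw [sub_eq_add_neg, ← map_neg C, coeff_pow_low (-A) (k + 1) p j hj]
  have hLp : u ^ L * u = 1 := by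
    rw [← pow_succ, hL1]
    exact hdvdpow _ ⟨k + 1, mul_comm _ _⟩
  have hc0 : P.coeff 0 = u * B := by
    have h1 := congrArg (fun q => Polynomial.coeff q 0) hPmul
    simp only [Polynomial.mul_coeff_zero, Polynomial.coeff_add, Polynomial.coeff_X_zero,
      Polynomial.coeff_C_zero, zero_add] at h1
    rw [hRHS 0 hp.pos, if_pos rfl] at h1
    calc P.coeff 0 = P.coeff 0 * (u ^ L * u) := by rw [hLp, mul_one]
    _ = (P.coeff 0 * u ^ L) * u := by ring
    _ = u * B := by rw [h1]; ring
  have hstep : ∀ j, 0 < j → j < p → P.coeff j = (-u) * P.coeff (j - 1) := by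
    intro j hj0 hjp
    obtain ⟨j', rfl⟩ : ∃ j', j = j' + 1 := ⟨j - 1, by omega⟩
    have h1 := congrArg (fun q => Polynomial.coeff q (j' + 1)) hPmul
    simp only [mul_add, Polynomial.coeff_add, Polynomial.coeff_mul_X,
      Polynomial.coeff_mul_C] at h1
    rw [hRHS (j' + 1) hjp, if_neg (by omega)] at h1
    simp only [Nat.add_sub_cancel]
    linear_combination u * h1 - P.coeff (j' + 1) * hLp
  have hchain : ∀ j, j < p → P.coeff j = (-u) ^ j * (u * B) := by
    intro j
    induction j with
    | zero => intro _; simpa using hc0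
    | succ j ih =>
      intro hj
      rw [hstep (j + 1) (by omega) hj]
      simp only [Nat.add_sub_cancel]
      rw [ih (by omega)]
      ring
  have hvieta : P.coeff (p - 1) = ∑ S ∈ (range L).powersetCard n, u ^ (S.sum id) := by
    have hcard : p - 1 ≤ #(range L) := by rw [card_range]; omega
    rw [hP, Finset.prod_X_add_C_coeff (range L) (fun a => u ^ a) hcard]
    rw [card_range]
    have : L - (p - 1) = n := by omega
    rw [this]
    exact Finset.sum_congr rfl fun S _ => Finset.prod_pow_eq_pow_sum S id u
  have hsum : ∑ S ∈ (range L).powersetCard n, u ^ (S.sum id)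
      = (-u) ^ (p - 1) * (u * B) := by
    rw [← hvieta, hchain (p - 1) (by omega)]
  -- now the final computation
  set c := p - (n * (n - 1) / 2) % p with hc
  have hfinal : ∑ S ∈ (range L).powersetCard n, u ^ (S.sum id + n + c)
      = (-u) ^ (p - 1) * (u * B) * u ^ (n + c) := by
    rw [← hsum, Finset.sum_mul]
    exact Finset.sum_congr rfl fun S _ => by rw [← pow_add, add_assoc]
  rw [hfinal]
  rcases hp.eq_two_or_odd' with hp2' | hpodd
  · -- p = 2
    subst hp2'
    have hu2 : u = -1 := hu.eq_neg_one_of_two_right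
    have hr0 : (n * (n - 1) / 2) % 2 = k % 2 := by
      have h1 : n * (n - 1) / 2 = k * (2 * k - 1) := by
        simp only [hn, mul_comm k 2]
        rw [mul_assoc, Nat.mul_div_cancel_left _ (by norm_num : (0:ℕ) < 2)]
      rw [h1, Nat.mul_mod]
      have h2 : (2 * k - 1) % 2 = 1 := by omega
      rw [h2, mul_one]
      omega
    rw [hu2]
    rw [show ((-(-1) : ℂ)) ^ (2 - 1) = 1 by norm_num]
    rw [hB, hA]
    rw [show ((-((-1):ℂ) ^ 2) : ℂ) = -1 by norm_num]
    rw [show ((-1 : ℂ) * (-1) ^ (k + 1)) = (-1) ^ (k + 2) by ring]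
    rw [one_mul, ← pow_add]
    apply Even.neg_one_pow
    rw [Nat.even_iff]
    omega
  · -- p odd
    have hA1 : A = -1 := hpodd.neg_one_pow
    have hB1 : B = 1 := by rw [hB, hA1, neg_neg, one_pow]
    have hD : p ∣ n * (n - 1) / 2 := by
      have h2 : 2 ∣ n * (n - 1) := by
        rcases Nat.even_or_odd n with he | ho
        · exact Dvd.dvd.mul_right he.two_dvd _
        · exact Dvd.dvd.mul_left (Nat.Odd.sub_odd ho odd_one).two_dvd _
      have hmul : n * (n - 1) / 2 * 2 = n * (n - 1) := Nat.div_mul_cancel h2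
      have hpd : p ∣ n * (n - 1) / 2 * 2 := by
        rw [hmul, hn]
        exact Dvd.dvd.mul_right (Dvd.dvd.mul_left dvd_rfl k) _
      have hnd : ¬ p ∣ 2 := by
        intro h
        have h2' := Nat.le_of_dvd (by norm_num) h
        obtain ⟨t, ht⟩ := hpodd
        omega
      exact Nat.Coprime.dvd_of_dvd_mul_right ((Nat.Prime.coprime_iff_not_dvd hp).mpr hnd) hpd
    have hr0 : (n * (n - 1) / 2) % p = 0 := Nat.mod_eq_zero_of_dvd hD
    have hcp : c = p := by omega
    have hEv : Even (p - 1) := Nat.Odd.sub_odd hpodd odd_one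
    rw [hB1, hEv.neg_pow, mul_one, ← pow_succ, ← pow_add]
    have hp1 : p - 1 + 1 = p := by omega
    have hexp : p - 1 + 1 + (n + c) = p * (k + 2) := by
      rw [hp1, hcp, hn]; ring
    exact hdvdpow _ ⟨k + 2, hexp⟩


lemma fourier (p k : ℕ) (hp : p.Prime) (hk : 1 ≤ k) :
    p * (target p (k * p)).card = (p - 1) + Nat.choose (k * p + (p - 1)) (k * p) := by
  classical
  have hp2 := hp.two_le
  set n := k * p with hn
  set L := n + (p - 1) with hL
  set c := p - (n * (n - 1) / 2) % p with hc
  set ζ : ℂ := Complex.exp (2 * Real.pi * Complex.I / p) with hζdef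
  have hζ : IsPrimitiveRoot ζ p := Complex.isPrimitiveRoot_exp p (by omega)
  have hkey : ∀ m : ℕ, (∑ j ∈ range p, ζ ^ (j * m)) = if m % p = 0 then (p : ℂ) else 0 := by
    intro m
    by_cases hdvd : p ∣ m
    · rw [if_pos (Nat.mod_eq_zero_of_dvd hdvd)]
      have : ∀ j ∈ range p, ζ ^ (j * m) = 1 := by
        intro j _
        obtain ⟨t, rfl⟩ := hdvd
        rw [show j * (p * t) = p * (j * t) by ring, pow_mul, hζ.pow_eq_one, one_pow]
      rw [Finset.sum_congr rfl this, Finset.sum_const, card_range, nsmul_eq_mul, mul_one]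
    · rw [if_neg (fun h => hdvd (Nat.dvd_of_mod_eq_zero h))]
      have hne : ζ ^ m ≠ 1 := fun h => hdvd ((hζ.pow_eq_one_iff_dvd m).mp h)
      have : ∀ j ∈ range p, ζ ^ (j * m) = (ζ ^ m) ^ j := by
        intro j _
        rw [← pow_mul, mul_comm]
      rw [Finset.sum_congr rfl this, geom_sum_eq hne p, ← pow_mul, mul_comm m p, pow_mul,
        hζ.pow_eq_one, one_pow, sub_self, zero_div]
  have main : (p : ℂ) * (target p n).card
      = (Nat.choose L n : ℂ) + ((p : ℂ) - 1) := by
    have step1 : (p : ℂ) * (target p n).card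
        = ∑ S ∈ (range L).powersetCard n,
            (if (S.sum id + n + c) % p = 0 then (p : ℂ) else 0) := by
      rw [← Finset.sum_filter]
      rw [Finset.sum_const, nsmul_eq_mul, mul_comm]
      rfl
    have step2 : ∀ S ∈ (range L).powersetCard n,
        (if (S.sum id + n + c) % p = 0 then (p : ℂ) else 0)
          = ∑ j ∈ range p, ζ ^ (j * (S.sum id + n + c)) := fun S _ => (hkey _).symm
    rw [step1, Finset.sum_congr rfl step2, Finset.sum_comm]
    have step3 : ∀ j ∈ range p, ∑ S ∈ (range L).powersetCard n, ζ ^ (j * (S.sum id + n + c))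
        = ∑ S ∈ (range L).powersetCard n, (ζ ^ j) ^ (S.sum id + n + c) := by
      intro j _
      exact Finset.sum_congr rfl fun S _ => by rw [← pow_mul]
    rw [Finset.sum_congr rfl step3]
    rw [Finset.sum_eq_sum_sdiff_singleton_add (Finset.mem_range.mpr hp.pos : 0 ∈ range p)]
    have hzero : ∑ S ∈ (range L).powersetCard n, (ζ ^ 0) ^ (S.sum id + n + c)
        = (Nat.choose L n : ℂ) := by
      simp only [pow_zero, one_pow]
      rw [Finset.sum_const, Finset.card_powersetCard, card_range, nsmul_eq_mul, mul_one]
    have hrest : ∀ j ∈ (range p) \ {0},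
        ∑ S ∈ (range L).powersetCard n, (ζ ^ j) ^ (S.sum id + n + c) = 1 := by
      intro j hj
      rw [Finset.mem_sdiff, Finset.mem_range, Finset.mem_singleton] at hj
      have hcop : Nat.Coprime j p := Nat.Coprime.symm
        ((Nat.Prime.coprime_iff_not_dvd hp).mpr
          (fun h => by have := Nat.le_of_dvd (by omega) h; omega))
      exact sum_primroot p k hp hk (hζ.pow_of_coprime j hcop)
    rw [Finset.sum_congr rfl hrest, Finset.sum_const]
    rw [Finset.card_sdiff_of_subset (by simp [hp.pos]), card_range, Finset.card_singleton]
    rw [hzero, nsmul_eq_mul, mul_one]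
    push_cast [Nat.cast_sub (by omega : 1 ≤ p)]
    ring
  have : ((p * (target p n).card : ℕ) : ℂ) = (((p - 1) + Nat.choose L n : ℕ) : ℂ) := by
    push_cast [Nat.cast_sub (by omega : 1 ≤ p)]
    rw [main]
    ring
  exact_mod_cast this

end CRPP

theorem card_restricted_partitions_prime (p : ℕ) (hp : p.Prime) (k : ℕ) (hk : 1 ≤ k) :
    p * Nat.card {f : Fin (k * p) → ℕ // Monotone f ∧ (∀ j, 1 ≤ f j ∧ f j ≤ p) ∧
        (∑ j, f j) % p = 0} = (p - 1) + Nat.choose ((k + 1) * p - 1) (p - 1) := by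
  have hp2 := hp.two_le
  have hn : 0 < k * p := by positivity
  rw [CRPP.card_subtype hp2 hn, CRPP.fourier p k hp hk]
  congr 1
  have hLe : k * p + (p - 1) = (k + 1) * p - 1 := by
    have : (k + 1) * p = k * p + p := by ring
    omega
  have hsymm : Nat.choose (k * p + (p - 1)) (k * p + (p - 1) - (k * p))
      = Nat.choose (k * p + (p - 1)) (k * p) := Nat.choose_symm (by omega)
  have : k * p + (p - 1) - k * p = p - 1 := by omega
  rw [this] at hsymm
  rw [← hsymm, hLe]
end

section
/- For positive integers n and k, the number of nondecreasing tuples (λ₁,…,λ_{kn}) ∈ ℤ^{kn} with 1 ≤ λ₁ ≤ ⋯ ≤ λ_{kn} ≤ n and ∑λᵢ ≡ 0 (mod n) equals (1/n) ∑_{d|n} C(dk+d−1, d−1) φ(n/d). -/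
open Finset

/-! ### Periodic products -/

private lemma aux_periodic_prod {M : Type*} [CommMonoid M] (F : ℕ → M) (e : ℕ)
    (hF : ∀ i, F (i + e) = F i) :
    ∀ c, ∏ i ∈ Finset.range (e * c), F i = (∏ i ∈ Finset.range e, F i) ^ c := by
  have hshift : ∀ c i, F (e * c + i) = F i := by
    intro c
    induction c with
    | zero => simp
    | succ c ih =>
      intro i
      have h : e * (c + 1) + i = (e * c + i) + e := by ring
      rw [h, hF, ih]
  intro c
  induction c with
  | zero => simp
  | succ c ih =>
    rw [Nat.mul_succ, Finset.prod_range_add, ih, pow_succ]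
    congr 1
    exact Finset.prod_congr rfl fun i _ => hshift c i

/-! ### Roots of unity products -/

private lemma aux_inj {e : ℕ} {ω : ℂ} (hω : IsPrimitiveRoot ω e) (he : 0 < e) (s : ℕ) :
    ∀ i ∈ Finset.range e, ∀ j ∈ Finset.range e,
      ω ^ (i + s) = ω ^ (j + s) → i = j := by
  intro i hi j hj hij
  rw [Finset.mem_range] at hi hj
  rw [pow_add, pow_add] at hij
  have hs : ω ^ s ≠ 0 := pow_ne_zero _ (hω.ne_zero he.ne')
  exact hω.pow_inj hi hj (mul_right_cancel₀ hs hij)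

private lemma aux_image {e : ℕ} {ω : ℂ} (hω : IsPrimitiveRoot ω e) (he : 0 < e) (s : ℕ) :
    (Finset.range e).image (fun i => ω ^ (i + s)) = Polynomial.nthRootsFinset e (1 : ℂ) := by
  apply Finset.eq_of_subset_of_card_le
  · intro x hx
    obtain ⟨i, _, rfl⟩ := Finset.mem_image.mp hx
    rw [Polynomial.mem_nthRootsFinset he]
    rw [← pow_mul, mul_comm, pow_mul, hω.pow_eq_one, one_pow]
  · rw [hω.card_nthRootsFinset, Finset.card_image_of_injOn]
    · rw [Finset.card_range]
    · intro i hi j hj hij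
      exact aux_inj hω he s i (Finset.mem_coe.mp hi) j (Finset.mem_coe.mp hj) hij

private lemma aux_prod_block {e : ℕ} {ω : ℂ} (hω : IsPrimitiveRoot ω e) (he : 0 < e) (s : ℕ)
    (G : ℂ → ℂ) :
    ∏ i ∈ Finset.range e, G (ω ^ (i + s)) = ∏ μ ∈ Polynomial.nthRootsFinset e (1 : ℂ), G μ := by
  rw [← aux_image hω he s, Finset.prod_image (aux_inj hω he s)]

private lemma aux_eval_prod {e : ℕ} {ω : ℂ} (hω : IsPrimitiveRoot ω e) (he : 0 < e) (z : ℂ) :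
    ∀ w : ℂ, ∏ μ ∈ Polynomial.nthRootsFinset e (1 : ℂ), (w - μ) = w ^ e - 1 := by
  intro w
  have h := congrArg (Polynomial.eval w) (Polynomial.X_pow_sub_one_eq_prod he hω)
  simpa [Polynomial.eval_prod] using h.symm

private lemma aux_prod_one_sub {e : ℕ} {ω : ℂ} (hω : IsPrimitiveRoot ω e) (he : 0 < e) (z : ℂ) :
    ∏ μ ∈ Polynomial.nthRootsFinset e (1 : ℂ), (1 - μ * z) = 1 - z ^ e := by
  have hcard := hω.card_nthRootsFinset
  rcases eq_or_ne z 0 with rfl | hz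
  · simp [he.ne']
  · have h1 : ∀ μ ∈ Polynomial.nthRootsFinset e (1 : ℂ), 1 - μ * z = (-z) * (μ - z⁻¹) := by
      intro μ _
      field_simp
      ring
    rw [Finset.prod_congr rfl h1, Finset.prod_mul_distrib, Finset.prod_const, hcard]
    have h2 : ∀ μ ∈ Polynomial.nthRootsFinset e (1 : ℂ), μ - z⁻¹ = (-1) * (z⁻¹ - μ) := by
      intro μ _; ring
    rw [Finset.prod_congr rfl h2, Finset.prod_mul_distrib, Finset.prod_const, hcard,
      aux_eval_prod hω he z z⁻¹]
    rw [← mul_assoc, ← mul_pow, neg_mul_neg, mul_one, mul_sub, ← mul_pow,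
      mul_inv_cancel₀ hz, one_pow, mul_one]

private lemma aux_Qpoly {e d : ℕ} {ω : ℂ} (hω : IsPrimitiveRoot ω e) (he : 0 < e) :
    (∏ i ∈ Finset.range (e * d), (1 - Polynomial.C (ω ^ (i + 1)) * Polynomial.X) : Polynomial ℂ)
      = (1 - Polynomial.X ^ e) ^ d := by
  apply Polynomial.funext
  intro z
  rw [Polynomial.eval_prod]
  simp only [Polynomial.eval_sub, Polynomial.eval_one, Polynomial.eval_mul, Polynomial.eval_C,
    Polynomial.eval_X, Polynomial.eval_pow]
  have hper : ∀ i, (fun i => 1 - ω ^ (i + 1) * z) (i + e) = (fun i => 1 - ω ^ (i + 1) * z) i := by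
    intro i
    simp only []
    rw [show i + e + 1 = (i + 1) + e by ring, pow_add, hω.pow_eq_one, mul_one]
  rw [aux_periodic_prod _ e hper d, aux_prod_block hω he 1 (fun μ => 1 - μ * z),
    aux_prod_one_sub hω he z]

/-! ### Power series lemmas -/

private lemma aux_geom (c : ℂ) :
    (PowerSeries.mk fun m => c ^ m) * (1 - PowerSeries.C c * PowerSeries.X) = 1 := by
  rw [mul_sub, mul_one, mul_comm (PowerSeries.C c) PowerSeries.X, ← mul_assoc]
  ext n
  cases n with
  | zero => simp
  | succ n =>
    rw [map_sub, PowerSeries.coeff_mul_C, PowerSeries.coeff_succ_mul_X, PowerSeries.coeff_mk,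
      PowerSeries.coeff_mk]
    simp [pow_succ]

private lemma aux_geom_e {e : ℕ} (he : 0 < e) :
    ((1 : PowerSeries ℂ) - PowerSeries.X ^ e) * (PowerSeries.mk fun m => if e ∣ m then (1 : ℂ) else 0)
      = 1 := by
  ext n
  rw [sub_mul, one_mul, map_sub, PowerSeries.coeff_X_pow_mul', PowerSeries.coeff_mk]
  rcases Nat.eq_zero_or_pos n with rfl | hn
  · have h1 : ¬ e ≤ 0 := by omega
    simp [h1]
  · rw [PowerSeries.coeff_one, if_neg hn.ne']
    by_cases hle : e ≤ n
    · rw [if_pos hle, PowerSeries.coeff_mk]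
      by_cases hdvd : e ∣ n
      · rw [if_pos hdvd, if_pos (Nat.dvd_sub hdvd dvd_rfl), sub_self]
      · rw [if_neg hdvd, if_neg, sub_self]
        intro hc
        exact hdvd (by have := Nat.dvd_add hc (dvd_refl e); rwa [Nat.sub_add_cancel hle] at this)
    · rw [if_neg hle, if_neg, sub_zero]
      intro hc
      exact hle (Nat.le_of_dvd hn hc)

private lemma aux_sieve {e : ℕ} (he : 0 < e) (F : ℕ → ℂ) (n : ℕ) :
    ∑ a ∈ Finset.range (n + 1), (if e ∣ a then F (a / e) else 0)
      = ∑ s ∈ Finset.range (n / e + 1), F s := by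
  classical
  rw [← Finset.sum_filter]
  refine Finset.sum_nbij' (fun a => a / e) (fun s => e * s) ?_ ?_ ?_ ?_ ?_
  · intro a ha
    rw [Finset.mem_filter, Finset.mem_range] at ha
    rw [Finset.mem_range]
    show a / e < n / e + 1
    exact Nat.lt_succ_iff.mpr (Nat.div_le_div_right (Nat.lt_succ_iff.mp ha.1))
  · intro s hs
    rw [Finset.mem_range] at hs
    rw [Finset.mem_filter, Finset.mem_range]
    constructor
    · show e * s < n + 1
      have h1 : e * s ≤ e * (n / e) := Nat.mul_le_mul_left e (Nat.lt_succ_iff.mp hs)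
      have h2 : e * (n / e) ≤ n := by rw [mul_comm]; exact Nat.div_mul_le_self n e
      omega
    · show e ∣ e * s
      exact Dvd.intro s rfl
  · intro a ha
    rw [Finset.mem_filter] at ha
    show e * (a / e) = a
    exact Nat.mul_div_cancel' ha.2
  · intro s _
    show e * s / e = s
    exact Nat.mul_div_cancel_left s he
  · intro a _
    rfl

private lemma aux_Bd {e : ℕ} (he : 0 < e) (d : ℕ) :
    ((PowerSeries.mk fun m => if e ∣ m then (1 : ℂ) else 0) ^ (d + 1))
      = PowerSeries.mk fun m => if e ∣ m then ((d + m / e).choose d : ℂ) else 0 := by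
  induction d with
  | zero =>
    rw [pow_one]
    ext n
    simp
  | succ d ih =>
    rw [pow_succ, ih]
    ext n
    rw [PowerSeries.coeff_mul, PowerSeries.coeff_mk,
      Finset.Nat.sum_antidiagonal_eq_sum_range_succ_mk]
    simp only [PowerSeries.coeff_mk]
    by_cases hn : e ∣ n
    · rw [if_pos hn]
      have hstep : ∀ a ∈ Finset.range (n + 1),
          (if e ∣ a then ((d + a / e).choose d : ℂ) else 0) *
            (if e ∣ n - a then (1 : ℂ) else 0)
          = if e ∣ a then ((d + a / e).choose d : ℂ) else 0 := by
        intro a ha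
        by_cases h : e ∣ a
        · rw [if_pos h, if_pos (Nat.dvd_sub hn h), mul_one]
        · rw [if_neg h, zero_mul]
      rw [Finset.sum_congr rfl hstep, aux_sieve he (fun s => ((d + s).choose d : ℂ)) n]
      have := Nat.sum_range_add_choose (n / e) d
      have hcast : ∑ s ∈ Finset.range (n / e + 1), ((d + s).choose d : ℂ)
          = ((n / e + d + 1).choose (d + 1) : ℂ) := by
        rw [← this]
        push_cast
        refine Finset.sum_congr rfl fun s _ => ?_
        rw [add_comm d s]
      rw [hcast]
      congr 2
      omega
    · rw [if_neg hn]
      apply Finset.sum_eq_zero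
      intro a ha
      rw [Finset.mem_range, Nat.lt_succ_iff] at ha
      by_cases h : e ∣ a
      · rw [if_pos h, if_neg, mul_zero]
        intro hc
        exact hn (by have := Nat.dvd_add hc h; rwa [Nat.sub_add_cancel ha] at this)
      · rw [if_neg h, zero_mul]

private lemma aux_coeff_P {e d : ℕ} {ω : ℂ} (hω : IsPrimitiveRoot ω e) (he : 0 < e)
    (hd : 0 < d) (m : ℕ) (hm : e ∣ m) :
    PowerSeries.coeff m (∏ i ∈ Finset.range (e * d), PowerSeries.mk fun t => (ω ^ (i + 1)) ^ t)
      = ((d - 1 + m / e).choose (d - 1) : ℂ) := by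
  have hQ : (∏ i ∈ Finset.range (e * d),
      ((1 : PowerSeries ℂ) - PowerSeries.C (ω ^ (i + 1)) * PowerSeries.X))
      = ((1 : PowerSeries ℂ) - PowerSeries.X ^ e) ^ d := by
    calc ∏ i ∈ Finset.range (e * d), ((1 : PowerSeries ℂ) - PowerSeries.C (ω ^ (i + 1)) * PowerSeries.X)
        = ∏ i ∈ Finset.range (e * d),
            Polynomial.coeToPowerSeries.ringHom (1 - Polynomial.C (ω ^ (i + 1)) * Polynomial.X) := by
          refine Finset.prod_congr rfl fun i _ => ?_
          rw [Polynomial.coeToPowerSeries.ringHom_apply, Polynomial.coe_sub, Polynomial.coe_mul,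
            Polynomial.coe_C, Polynomial.coe_X, Polynomial.coe_one]
      _ = Polynomial.coeToPowerSeries.ringHom
            (∏ i ∈ Finset.range (e * d), (1 - Polynomial.C (ω ^ (i + 1)) * Polynomial.X)) :=
          (map_prod _ _ _).symm
      _ = Polynomial.coeToPowerSeries.ringHom ((1 - Polynomial.X ^ e) ^ d) := by
          rw [aux_Qpoly hω he]
      _ = ((1 : PowerSeries ℂ) - PowerSeries.X ^ e) ^ d := by
          rw [map_pow, map_sub, map_one, map_pow, Polynomial.coeToPowerSeries.ringHom_apply,
            Polynomial.coe_X]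
  set P := ∏ i ∈ Finset.range (e * d), PowerSeries.mk fun t => (ω ^ (i + 1)) ^ t with hP
  set B := PowerSeries.mk fun m => if e ∣ m then (1 : ℂ) else 0 with hB
  have hP1 : P * (((1 : PowerSeries ℂ) - PowerSeries.X ^ e) ^ d) = 1 := by
    rw [← hQ, hP, ← Finset.prod_mul_distrib]
    rw [Finset.prod_congr rfl fun i _ => aux_geom (ω ^ (i + 1))]
    exact Finset.prod_const_one
  have hB1 : (((1 : PowerSeries ℂ) - PowerSeries.X ^ e) ^ d) * B ^ d = 1 := by
    rw [← mul_pow, aux_geom_e he, one_pow]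
  have hPB : P = B ^ d := by
    calc P = P * ((((1 : PowerSeries ℂ) - PowerSeries.X ^ e) ^ d) * B ^ d) := by rw [hB1, mul_one]
      _ = (P * (((1 : PowerSeries ℂ) - PowerSeries.X ^ e) ^ d)) * B ^ d := by ring
      _ = B ^ d := by rw [hP1, one_mul]
  rw [hPB]
  obtain ⟨d', rfl⟩ : ∃ d', d = d' + 1 := ⟨d - 1, (Nat.succ_pred_eq_of_pos hd).symm⟩
  rw [hB, aux_Bd he d', PowerSeries.coeff_mk, if_pos hm]
  simp

/-! ### Coefficient as a sum over tuples -/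

private lemma aux_coeff_sum {n : ℕ} (x : Fin n → ℂ) (m : ℕ) :
    ∑ a ∈ Finset.Nat.antidiagonalTuple n m, ∏ i, x i ^ a i
      = PowerSeries.coeff m (∏ i, PowerSeries.mk fun t => x i ^ t) := by
  classical
  rw [PowerSeries.coeff_prod]
  simp only [PowerSeries.coeff_mk]
  refine Finset.sum_nbij' (fun a => Finsupp.equivFunOnFinite.symm a) (fun l => ⇑l) ?_ ?_ ?_ ?_ ?_
  · intro a ha
    rw [Finset.Nat.mem_antidiagonalTuple] at ha
    rw [Finset.mem_finsuppAntidiag]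
    refine ⟨?_, Finset.subset_univ _⟩
    simpa using ha
  · intro l hl
    rw [Finset.mem_finsuppAntidiag] at hl
    rw [Finset.Nat.mem_antidiagonalTuple]
    simpa using hl.1
  · intro a _
    exact Finsupp.equivFunOnFinite.apply_symm_apply a
  · intro l _
    exact Finsupp.equivFunOnFinite.symm_apply_apply l
  · intro a _
    rfl

/-! ### The multiset correspondence -/

private lemma aux_mem_Ma {n : ℕ} (a : Fin n → ℕ) {x : ℕ}
    (hx : x ∈ ∑ i : Fin n, a i • ({(i.1 + 1 : ℕ)} : Multiset ℕ)) : ∃ i : Fin n, x = i.1 + 1 := by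
  rw [Multiset.mem_sum] at hx
  obtain ⟨i, _, hxi⟩ := hx
  rw [Multiset.nsmul_singleton] at hxi
  exact ⟨i, Multiset.eq_of_mem_replicate hxi⟩

private def auxCardHom : Multiset ℕ →+ ℕ where
  toFun := Multiset.card
  map_zero' := rfl
  map_add' := Multiset.card_add

private def auxSumHom : Multiset ℕ →+ ℕ where
  toFun := Multiset.sum
  map_zero' := rfl
  map_add' := Multiset.sum_add

private lemma aux_card_Ma {n : ℕ} (a : Fin n → ℕ) :
    Multiset.card (∑ i : Fin n, a i • ({(i.1 + 1 : ℕ)} : Multiset ℕ)) = ∑ i, a i := by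
  have h := map_sum auxCardHom (fun i : Fin n => a i • ({(i.1 + 1 : ℕ)} : Multiset ℕ)) Finset.univ
  have h2 : ∀ i : Fin n, auxCardHom (a i • ({(i.1 + 1 : ℕ)} : Multiset ℕ)) = a i := by
    intro i
    show Multiset.card _ = a i
    rw [Multiset.nsmul_singleton, Multiset.card_replicate]
  rw [show Multiset.card (∑ i : Fin n, a i • ({(i.1 + 1 : ℕ)} : Multiset ℕ))
    = auxCardHom (∑ i : Fin n, a i • ({(i.1 + 1 : ℕ)} : Multiset ℕ)) from rfl, h]
  exact Finset.sum_congr rfl fun i _ => h2 i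

private lemma aux_sum_Ma {n : ℕ} (a : Fin n → ℕ) :
    (∑ i : Fin n, a i • ({(i.1 + 1 : ℕ)} : Multiset ℕ)).sum = ∑ i : Fin n, (i.1 + 1) * a i := by
  have h := map_sum auxSumHom (fun i : Fin n => a i • ({(i.1 + 1 : ℕ)} : Multiset ℕ)) Finset.univ
  rw [show (∑ i : Fin n, a i • ({(i.1 + 1 : ℕ)} : Multiset ℕ)).sum
    = auxSumHom (∑ i : Fin n, a i • ({(i.1 + 1 : ℕ)} : Multiset ℕ)) from rfl, h]
  refine Finset.sum_congr rfl fun i _ => ?_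
  show (a i • ({(i.1 + 1 : ℕ)} : Multiset ℕ)).sum = _
  rw [Multiset.nsmul_singleton, Multiset.sum_replicate, smul_eq_mul, mul_comm]

private lemma aux_count_Ma {n : ℕ} (a : Fin n → ℕ) (i0 : Fin n) :
    Multiset.count (i0.1 + 1) (∑ i : Fin n, a i • ({(i.1 + 1 : ℕ)} : Multiset ℕ)) = a i0 := by
  rw [Multiset.count_sum']
  rw [Finset.sum_eq_single i0]
  · rw [Multiset.count_nsmul, Multiset.count_singleton, if_pos rfl, mul_one]
  · intro i _ hne
    rw [Multiset.count_nsmul, Multiset.count_singleton, if_neg, mul_zero]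
    intro hc
    exact hne (Fin.ext (by omega))
  · intro h
    exact absurd (Finset.mem_univ i0) h

private lemma aux_key_multiset (n : ℕ) (M : Multiset ℕ) (hM : ∀ x ∈ M, 1 ≤ x ∧ x ≤ n) :
    ∑ i : Fin n, M.count (i.1 + 1) • ({(i.1 + 1 : ℕ)} : Multiset ℕ) = M := by
  classical
  have h1 : M.toFinset ⊆ Finset.image (fun i : Fin n => i.1 + 1) Finset.univ := by
    intro x hx
    obtain ⟨h1x, h2x⟩ := hM x (Multiset.mem_toFinset.mp hx)
    exact Finset.mem_image.mpr ⟨⟨x - 1, by omega⟩, Finset.mem_univ _, by show x - 1 + 1 = x; omega⟩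
  have hinj : ∀ i ∈ Finset.univ (α := Fin n), ∀ j ∈ Finset.univ (α := Fin n),
      i.1 + 1 = j.1 + 1 → i = j := by
    intro i _ j _ h
    exact Fin.ext (by omega)
  have h2 : ∑ i : Fin n, M.count (i.1 + 1) • ({(i.1 + 1 : ℕ)} : Multiset ℕ)
      = ∑ v ∈ Finset.image (fun i : Fin n => i.1 + 1) Finset.univ,
          M.count v • ({v} : Multiset ℕ) := by
    rw [Finset.sum_image hinj]
  calc ∑ i : Fin n, M.count (i.1 + 1) • ({(i.1 + 1 : ℕ)} : Multiset ℕ)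
      = ∑ v ∈ Finset.image (fun i : Fin n => i.1 + 1) Finset.univ,
          M.count v • ({v} : Multiset ℕ) := h2
    _ = ∑ v ∈ M.toFinset, M.count v • ({v} : Multiset ℕ) :=
        (Finset.sum_subset h1 (fun x _ hx => by
          rw [Multiset.count_eq_zero_of_notMem (fun hmm => hx (Multiset.mem_toFinset.mpr hmm)),
            zero_nsmul])).symm
    _ = M := Multiset.toFinset_sum_count_nsmul_eq M

/-! ### The cardinality via the tuple count -/

private lemma aux_card_eq (n k : ℕ) (hn : 1 ≤ n) :
    Nat.card {f : Fin (k * n) → ℕ // Monotone f ∧ (∀ j, 1 ≤ f j ∧ f j ≤ n) ∧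
        (∑ j, f j) % n = 0}
      = ((Finset.Nat.antidiagonalTuple n (k * n)).filter
          (fun a => (∑ i : Fin n, (i.1 + 1) * a i) % n = 0)).card := by
  classical
  rw [← Nat.card_eq_finsetCard]
  apply Nat.card_congr
  refine Equiv.ofBijective
    (fun f => ⟨fun i => Multiset.count (i.1 + 1) (↑(List.ofFn f.1) : Multiset ℕ), ?_⟩)
    ⟨?_, ?_⟩
  · -- membership
    obtain ⟨hmono, hb, hs⟩ := f.2
    have hM : ∀ x ∈ (↑(List.ofFn f.1) : Multiset ℕ), 1 ≤ x ∧ x ≤ n := by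
      intro x hx
      rw [Multiset.mem_coe, List.mem_ofFn] at hx
      obtain ⟨j, rfl⟩ := hx
      exact hb j
    have hkey := aux_key_multiset n _ hM
    rw [Finset.mem_filter, Finset.Nat.mem_antidiagonalTuple]
    constructor
    · have h1 : ∑ i : Fin n, Multiset.count (i.1 + 1) (↑(List.ofFn f.1) : Multiset ℕ)
          = Multiset.card (↑(List.ofFn f.1) : Multiset ℕ) := by
        conv_rhs => rw [← hkey]
        rw [aux_card_Ma]
      rw [h1, Multiset.coe_card, List.length_ofFn]
    · have h2 : ∑ i : Fin n, (i.1 + 1) * Multiset.count (i.1 + 1) (↑(List.ofFn f.1) : Multiset ℕ)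
          = (↑(List.ofFn f.1) : Multiset ℕ).sum := by
        conv_rhs => rw [← hkey]
        rw [aux_sum_Ma]
      rw [h2, Multiset.sum_coe, List.sum_ofFn]
      exact hs
  · -- injective
    intro f g hfg
    have hcnt : ∀ i : Fin n,
        Multiset.count (i.1 + 1) (↑(List.ofFn f.1) : Multiset ℕ)
          = Multiset.count (i.1 + 1) (↑(List.ofFn g.1) : Multiset ℕ) := by
      intro i
      exact congrFun (congrArg Subtype.val hfg) i
    have hMf : ∀ x ∈ (↑(List.ofFn f.1) : Multiset ℕ), 1 ≤ x ∧ x ≤ n := by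
      intro x hx
      rw [Multiset.mem_coe, List.mem_ofFn] at hx
      obtain ⟨j, rfl⟩ := hx
      exact f.2.2.1 j
    have hMg : ∀ x ∈ (↑(List.ofFn g.1) : Multiset ℕ), 1 ≤ x ∧ x ≤ n := by
      intro x hx
      rw [Multiset.mem_coe, List.mem_ofFn] at hx
      obtain ⟨j, rfl⟩ := hx
      exact g.2.2.1 j
    have hMM : (↑(List.ofFn f.1) : Multiset ℕ) = (↑(List.ofFn g.1) : Multiset ℕ) := by
      rw [← aux_key_multiset n _ hMf, ← aux_key_multiset n _ hMg]
      exact Finset.sum_congr rfl fun i _ => by rw [hcnt i]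
    have hperm := Multiset.coe_eq_coe.mp hMM
    have hlf : List.ofFn f.1 = List.ofFn g.1 :=
      List.Perm.eq_of_pairwise' (List.sortedLE_iff_pairwise.mp (List.sortedLE_ofFn_iff.mpr f.2.1))
        (List.sortedLE_iff_pairwise.mp (List.sortedLE_ofFn_iff.mpr g.2.1)) hperm
    exact Subtype.ext (List.ofFn_injective hlf)
  · -- surjective
    rintro ⟨a, ha⟩
    rw [Finset.mem_filter, Finset.Nat.mem_antidiagonalTuple] at ha
    obtain ⟨hsum, hcond⟩ := ha
    set M := ∑ i : Fin n, a i • ({(i.1 + 1 : ℕ)} : Multiset ℕ) with hMdef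
    set L := M.sort (· ≤ ·) with hL
    have hlen : L.length = k * n := by
      rw [hL, Multiset.length_sort, hMdef, aux_card_Ma, hsum]
    set f : Fin (k * n) → ℕ := fun j => L.get (Fin.cast hlen.symm j) with hf
    have hofn : List.ofFn f = L := by
      apply List.ext_get
      · rw [List.length_ofFn, hlen]
      · intro i h1 h2
        rw [List.get_ofFn]
        rfl
    have hMf : (↑(List.ofFn f) : Multiset ℕ) = M := by
      rw [hofn, hL]
      exact Multiset.sort_eq _ _
    have hmono : Monotone f := by
      rw [← List.sortedLE_ofFn_iff, hofn, hL]
      exact List.sortedLE_iff_pairwise.mpr (Multiset.pairwise_sort _ _)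
    have hbounds : ∀ j, 1 ≤ f j ∧ f j ≤ n := by
      intro j
      have hmem : f j ∈ M := by
        rw [← hMf, Multiset.mem_coe, List.mem_ofFn]
        exact ⟨j, rfl⟩
      obtain ⟨i, hi⟩ := aux_mem_Ma a hmem
      constructor
      · omega
      · have := i.2; omega
    have hsumf : (∑ j, f j) % n = 0 := by
      have : ∑ j, f j = M.sum := by
        rw [← hMf, Multiset.sum_coe, List.sum_ofFn]
      rw [this, hMdef, aux_sum_Ma]
      exact hcond
    refine ⟨⟨f, hmono, hbounds, hsumf⟩, ?_⟩
    apply Subtype.ext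
    funext i
    show Multiset.count (i.1 + 1) (↑(List.ofFn f) : Multiset ℕ) = a i
    rw [hMf, hMdef, aux_count_Ma]

/-! ### Roots of unity filter -/

private lemma aux_filter {n : ℕ} {ζ : ℂ} (hζ : IsPrimitiveRoot ζ n) (hn : 0 < n) (m : ℕ) :
    ∑ j ∈ Finset.range n, ζ ^ (j * m) = if n ∣ m then (n : ℂ) else 0 := by
  by_cases h : n ∣ m
  · rw [if_pos h]
    have h1 : ∀ j ∈ Finset.range n, ζ ^ (j * m) = 1 := by
      intro j _
      exact (hζ.pow_eq_one_iff_dvd _).mpr (Dvd.dvd.mul_left h j)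
    rw [Finset.sum_congr rfl h1]
    simp
  · rw [if_neg h]
    have hne : ζ ^ m ≠ 1 := fun hone => h ((hζ.pow_eq_one_iff_dvd m).mp hone)
    have h2 : ∑ j ∈ Finset.range n, ζ ^ (j * m) = ∑ j ∈ Finset.range n, (ζ ^ m) ^ j := by
      refine Finset.sum_congr rfl fun j _ => ?_
      rw [← pow_mul, mul_comm]
    rw [h2, geom_sum_eq hne, ← pow_mul, mul_comm m n, pow_mul, hζ.pow_eq_one, one_pow,
      sub_self, zero_div]

/-! ### The per-j evaluation -/

private lemma aux_perj (n k : ℕ) (hn : 0 < n) {ζ : ℂ} (hζ : IsPrimitiveRoot ζ n) (j : ℕ) :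
    ∑ a ∈ Finset.Nat.antidiagonalTuple n (k * n), ζ ^ (j * ∑ i : Fin n, (i.1 + 1) * a i)
      = ((Nat.gcd n j * k + Nat.gcd n j - 1).choose (Nat.gcd n j - 1) : ℂ) := by
  classical
  set d := Nat.gcd n j with hd
  have hdpos : 0 < d := Nat.gcd_pos_of_pos_left _ hn
  have hddvd : d ∣ n := Nat.gcd_dvd_left n j
  set e := n / d with he
  have hepos : 0 < e := Nat.div_pos (Nat.le_of_dvd hn hddvd) hdpos
  have hn' : n = e * d := by
    rw [he, Nat.div_mul_cancel hddvd]
  set ω := ζ ^ j with hw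
  have hω : IsPrimitiveRoot ω e := by
    have h1 : IsPrimitiveRoot (ζ ^ d) e := hζ.pow hn (by rw [hn', mul_comm])
    have h2 : ω = (ζ ^ d) ^ (j / d) := by
      rw [hw, ← pow_mul, Nat.mul_div_cancel' (Nat.gcd_dvd_right n j)]
    have h3 : Nat.Coprime (j / d) e := by
      have := Nat.coprime_div_gcd_div_gcd (m := n) (n := j) hdpos
      exact this.symm
    rw [h2]
    exact h1.pow_of_coprime _ h3
  have hstep : ∀ a ∈ Finset.Nat.antidiagonalTuple n (k * n),
      ζ ^ (j * ∑ i : Fin n, (i.1 + 1) * a i) = ∏ i : Fin n, (ω ^ (i.1 + 1)) ^ a i := by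
    intro a _
    rw [pow_mul]
    rw [← hw]
    have : ∀ i : Fin n, (ω ^ (i.1 + 1)) ^ a i = ω ^ ((i.1 + 1) * a i) := by
      intro i; rw [← pow_mul]
    rw [Finset.prod_congr rfl fun i _ => this i, Finset.prod_pow_eq_pow_sum]
  rw [Finset.sum_congr rfl hstep, aux_coeff_sum (fun i : Fin n => ω ^ (i.1 + 1)) (k * n)]
  have hprod : (∏ i : Fin n, PowerSeries.mk fun t => (ω ^ (i.1 + 1)) ^ t)
      = ∏ i ∈ Finset.range n, PowerSeries.mk fun t => (ω ^ (i + 1)) ^ t := by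
    rw [Finset.prod_range (fun i => PowerSeries.mk fun t => (ω ^ (i + 1)) ^ t)]
  rw [hprod]
  have hmdvd : e ∣ k * n := by
    refine Dvd.dvd.mul_left ?_ k
    exact Dvd.intro d (by rw [← hn'])
  have hdiv : k * n / e = k * d := by
    rw [hn', show k * (e * d) = k * d * e by ring, Nat.mul_div_cancel _ hepos]
  rw [show Finset.range n = Finset.range (e * d) by rw [← hn']]
  rw [aux_coeff_P hω hepos hdpos (k * n) hmdvd, hdiv]
  rw [show d - 1 + k * d = d * k + d - 1 from by rw [Nat.mul_comm k d]; omega]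

/-! ### Grouping by gcd -/

private lemma aux_gcd_sum (n : ℕ) (hn : 0 < n) (V : ℕ → ℂ) :
    ∑ j ∈ Finset.range n, V (Nat.gcd n j)
      = ∑ d ∈ n.divisors, (Nat.totient (n / d) : ℂ) * V d := by
  classical
  rw [← Finset.sum_fiberwise_of_maps_to (g := fun j => Nat.gcd n j) (t := n.divisors)
    (fun j _ => Nat.mem_divisors.mpr ⟨Nat.gcd_dvd_left n j, hn.ne'⟩)
    (fun j => V (Nat.gcd n j))]
  refine Finset.sum_congr rfl fun d hd => ?_
  have hddvd : d ∣ n := (Nat.mem_divisors.mp hd).1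
  have hcongr : ∀ j ∈ Finset.filter (fun j => Nat.gcd n j = d) (Finset.range n),
      V (Nat.gcd n j) = V d := by
    intro j hj
    rw [(Finset.mem_filter.mp hj).2]
  rw [Finset.sum_congr rfl hcongr, Finset.sum_const, nsmul_eq_mul]
  congr 1
  rw [← Nat.totient_div_of_dvd hddvd]

/-! ### Main theorem -/

theorem card_restricted_partitions (n k : ℕ) (hn : 1 ≤ n) (hk : 1 ≤ k) :
    n * Nat.card {f : Fin (k * n) → ℕ // Monotone f ∧ (∀ j, 1 ≤ f j ∧ f j ≤ n) ∧
        (∑ j, f j) % n = 0} =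
      ∑ d ∈ n.divisors, Nat.choose (d * k + d - 1) (d - 1) * Nat.totient (n / d) := by
  classical
  have hn0 : n ≠ 0 := by omega
  have hnpos : 0 < n := hn
  rw [aux_card_eq n k hn]
  set T := (Finset.Nat.antidiagonalTuple n (k * n)).filter
    (fun a => (∑ i : Fin n, (i.1 + 1) * a i) % n = 0) with hT
  apply Nat.cast_injective (R := ℂ)
  push_cast
  set ζ : ℂ := Complex.exp (2 * Real.pi * Complex.I / n) with hζdef
  have hζ : IsPrimitiveRoot ζ n := Complex.isPrimitiveRoot_exp n hn0
  calc (n : ℂ) * (T.card : ℕ)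
      = ∑ a ∈ Finset.Nat.antidiagonalTuple n (k * n),
          (if n ∣ (∑ i : Fin n, (i.1 + 1) * a i) then (n : ℂ) else 0) := by
        rw [← Finset.sum_filter]
        have : Finset.filter (fun a => n ∣ (∑ i : Fin n, (i.1 + 1) * a i))
            (Finset.Nat.antidiagonalTuple n (k * n)) = T := by
          rw [hT]
          refine Finset.filter_congr fun a _ => ?_
          exact Nat.dvd_iff_mod_eq_zero
        rw [this, Finset.sum_const, nsmul_eq_mul, mul_comm]
      _ = ∑ a ∈ Finset.Nat.antidiagonalTuple n (k * n),
          ∑ j ∈ Finset.range n, ζ ^ (j * ∑ i : Fin n, (i.1 + 1) * a i) := by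
        refine Finset.sum_congr rfl fun a _ => ?_
        rw [aux_filter hζ hnpos]
      _ = ∑ j ∈ Finset.range n,
          ∑ a ∈ Finset.Nat.antidiagonalTuple n (k * n),
            ζ ^ (j * ∑ i : Fin n, (i.1 + 1) * a i) := Finset.sum_comm
      _ = ∑ j ∈ Finset.range n,
          ((Nat.gcd n j * k + Nat.gcd n j - 1).choose (Nat.gcd n j - 1) : ℂ) := by
        refine Finset.sum_congr rfl fun j _ => ?_
        exact aux_perj n k hnpos hζ j
      _ = ∑ d ∈ n.divisors,
          (Nat.totient (n / d) : ℂ) * ((d * k + d - 1).choose (d - 1) : ℂ) := by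
        rw [aux_gcd_sum n hnpos (fun d => ((d * k + d - 1).choose (d - 1) : ℂ))]
      _ = ∑ d ∈ n.divisors, (((d * k + d - 1).choose (d - 1) : ℂ) * (Nat.totient (n / d) : ℂ)) := by
        refine Finset.sum_congr rfl fun d _ => ?_
        rw [mul_comm]
end

section
/- For a prime p, the cardinality of the set of nondecreasing tuples (λ₁,…,λ_p) with 1 ≤ λ₁ ≤ ⋯ ≤ λ_p ≤ p and λ₁ + ⋯ + λ_p ≡ 0 (mod p) equals (p − 1 + C(2p−1, p−1))/p. -/
open Finset

/-! Auxiliary definitions: weighted sum, residue-constrained composition sets. -/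

def wtS (p : ℕ) (y : Fin p → ℕ) : ZMod p := ∑ i, (i.val : ZMod p) * y i

def YS (p m : ℕ) (r : ZMod p) : Type :=
  {y : Fin p → ℕ // (∑ i, y i) = m ∧ wtS p y = r}

def XT (p : ℕ) : Type := {y : Fin p → ℕ // (∑ i, y i) ≤ p - 1 ∧ wtS p y = 0}

def WT (p : ℕ) : Type := {y : Fin p → ℕ // (∑ i, y i) ≤ p - 1}

/-! Finiteness -/

lemma finite_of_sum_le {K N : ℕ} (Q : (Fin K → ℕ) → Prop) :
    Finite {y : Fin K → ℕ // (∑ i, y i) ≤ N ∧ Q y} := by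
  have : Function.Injective (fun (y : {y : Fin K → ℕ // (∑ i, y i) ≤ N ∧ Q y}) =>
      (fun i => (⟨y.1 i, by
        have h1 : y.1 i ≤ ∑ j, y.1 j := Finset.single_le_sum (fun j _ => Nat.zero_le _) (mem_univ i)
        omega⟩ : Fin (N+1))  : Fin K → Fin (N+1))) := by
    intro a b hab
    ext i
    simpa [Fin.mk.injEq] using congrArg Fin.val (congrFun hab i)
  exact Finite.of_injective _ this

instance YS.finite (p m : ℕ) (r : ZMod p) : Finite (YS p m r) := by
  have h : Finite {y : Fin p → ℕ // (∑ i, y i) ≤ m ∧ (∑ i, y i = m ∧ wtS p y = r)} :=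
    finite_of_sum_le _
  apply Finite.of_injective (fun y : YS p m r => (⟨y.1, le_of_eq y.2.1, y.2⟩ :
    {y : Fin p → ℕ // (∑ i, y i) ≤ m ∧ (∑ i, y i = m ∧ wtS p y = r)}))
  intro a b hab
  exact Subtype.ext (by simpa using congrArg Subtype.val hab)

lemma finite_sum_eq {K N : ℕ} (Q : (Fin K → ℕ) → Prop) :
    Finite {y : Fin K → ℕ // (∑ i, y i) = N ∧ Q y} := by
  have := finite_of_sum_le (K := K) (N := N) (fun y => (∑ i, y i) = N ∧ Q y)
  apply Finite.of_injective
    (fun y : {y : Fin K → ℕ // (∑ i, y i) = N ∧ Q y} =>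
      (⟨y.1, le_of_eq y.2.1, y.2⟩ : {y : Fin K → ℕ // (∑ i, y i) ≤ N ∧ ((∑ i, y i) = N ∧ Q y)}))
  intro a b hab
  exact Subtype.ext (by simpa using congrArg Subtype.val hab)

instance finite_sum_eq' {K N : ℕ} : Finite {y : Fin K → ℕ // (∑ i, y i) = N} := by
  have := finite_sum_eq (K := K) (N := N) (fun _ => True)
  apply Finite.of_injective
    (fun y : {y : Fin K → ℕ // (∑ i, y i) = N} =>
      (⟨y.1, y.2, trivial⟩ : {y : Fin K → ℕ // (∑ i, y i) = N ∧ True}))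
  intro a b hab
  exact Subtype.ext (by simpa using congrArg Subtype.val hab)

instance XT.finite (p : ℕ) : Finite (XT p) := finite_of_sum_le _

instance WT.finite (p : ℕ) : Finite (WT p) := by
  have := finite_of_sum_le (K := p) (N := p - 1) (fun _ => True)
  apply Finite.of_injective (fun y : WT p =>
      (⟨y.1, y.2, trivial⟩ : {y : Fin p → ℕ // (∑ i, y i) ≤ p - 1 ∧ True}))
  intro a b hab
  exact Subtype.ext (by simpa using congrArg Subtype.val hab)

/-! Fiber counting -/

lemma card_fiber {α : Type*} {β : Type*} [Finite α] [Fintype β] (f : α → β) :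
    Nat.card α = ∑ b : β, Nat.card {a // f a = b} := by
  classical
  have := Fintype.ofFinite α
  rw [← Nat.card_congr (Equiv.sigmaFiberEquiv f)]
  rw [Nat.card_eq_fintype_card, Fintype.card_sigma]
  simp [Nat.card_eq_fintype_card]

/-! Rotation: residue classes are equinumerous -/

section rot
variable {p : ℕ} [NeZero p]

lemma cast_val_add_one (i : Fin p) : (((i + 1 : Fin p).val : ℕ) : ZMod p) = (i.val : ZMod p) + 1 := by
  rw [Fin.val_add, ZMod.natCast_mod]
  push_cast
  rw [Fin.val_one']
  rw [ZMod.natCast_mod]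
  push_cast
  ring

lemma sum_rot (y : Fin p → ℕ) : ∑ i, y (i + 1) = ∑ i, y i :=
  Fintype.sum_equiv (Equiv.addRight 1) _ _ (fun _ => rfl)

lemma wt_rot (y : Fin p → ℕ) :
    wtS p (fun i => y (i + 1)) = wtS p y - (∑ i, y i : ℕ) := by
  unfold wtS
  have h : ∀ i : Fin p, (i.val : ZMod p) * (y (i + 1) : ZMod p)
      = (((i+1 : Fin p).val : ZMod p) - 1) * y (i + 1) := by
    intro i; rw [cast_val_add_one]; ring_nf
  rw [Finset.sum_congr rfl (fun i _ => h i)]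
  rw [Fintype.sum_equiv (Equiv.addRight 1)
    (fun i => (((i+1 : Fin p).val : ZMod p) - 1) * y (i + 1))
    (fun j => ((j.val : ZMod p) - 1) * y j) (fun i => rfl)]
  rw [Nat.cast_sum]
  simp only [sub_mul, one_mul, Finset.sum_sub_distrib]

def rotEquiv (m : ℕ) (r : ZMod p) : YS p m r ≃ YS p m (r - m) where
  toFun y := ⟨fun i => y.1 (i + 1), by
    have hs := y.2.1; have hw := y.2.2
    refine ⟨by rw [sum_rot, hs], ?_⟩
    rw [wt_rot, hs, hw]⟩
  invFun z := ⟨fun i => z.1 (i - 1), by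
    have hs := z.2.1; have hw := z.2.2
    set z := z.1 with hz
    have h1 : ∑ i, z (i - 1) = ∑ i, z i :=
      Fintype.sum_equiv (Equiv.subRight 1) _ _ (fun _ => rfl)
    refine ⟨by rw [h1, hs], ?_⟩
    have h2 := wt_rot (p := p) (fun i => z (i - 1))
    simp only [add_sub_cancel_right] at h2
    have h3 : wtS p (fun i => z i) = wtS p z := rfl
    rw [h3] at h2
    rw [hw] at h2
    rw [h1, hs] at h2
    have := congrArg (· + (m : ZMod p)) h2
    simpa using this.symm⟩
  left_inv y := by
    apply Subtype.ext; funext i; simp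
  right_inv z := by
    apply Subtype.ext; funext i; simp

lemma card_rot_iter (m : ℕ) (r : ZMod p) (k : ℕ) :
    Nat.card (YS p m r) = Nat.card (YS p m (r - (k : ZMod p) * (m : ZMod p))) := by
  induction k with
  | zero => simp
  | succ k ih =>
    rw [ih, Nat.card_congr (rotEquiv m (r - (k : ZMod p) * (m : ZMod p)))]
    congr 1
    push_cast
    ring

lemma card_YS_eq (hp : p.Prime) (m : ℕ) (hm : ¬ (p ∣ m)) (r r' : ZMod p) :
    Nat.card (YS p m r) = Nat.card (YS p m r') := by
  haveI : Fact p.Prime := ⟨hp⟩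
  have hm' : (m : ZMod p) ≠ 0 := by
    rwa [Ne, ZMod.natCast_eq_zero_iff]
  set k : ZMod p := (r - r') * (m : ZMod p)⁻¹ with hk
  rw [card_rot_iter m r k.val]
  congr 1
  rw [ZMod.natCast_val, ZMod.cast_id]
  rw [hk, mul_assoc, inv_mul_cancel₀ hm', mul_one]
  ring

end rot

/-! Base case m = 0 -/

lemma card_YS_zero (p : ℕ) (r : ZMod p) :
    Nat.card (YS p 0 r) = if r = 0 then 1 else 0 := by
  have hzero : ∀ z : YS p 0 r, z.1 = 0 := by
    intro z
    funext i
    have h2 : ∀ i ∈ (univ : Finset (Fin p)), z.1 i = 0 := by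
      have := z.2.1
      rwa [← Finset.sum_eq_zero_iff_of_nonneg (fun i _ => Nat.zero_le _)]
    exact h2 i (mem_univ i)
  have hwz : wtS p (0 : Fin p → ℕ) = 0 := by simp [wtS]
  split_ifs with hr
  · subst hr
    have : Unique (YS p 0 0) := {
      default := ⟨0, by simp, hwz⟩
      uniq := fun z => Subtype.ext (hzero z) }
    simp [Nat.card_unique]
  · have : IsEmpty (YS p 0 r) := ⟨fun z => by
      have h1 := z.2.2
      rw [hzero z, hwz] at h1
      exact hr h1.symm⟩
    simp

/-! Stars and bars -/

def sumTupleEquivSym (K n : ℕ) : {x : Fin K → ℕ // ∑ i, x i = n} ≃ Sym (Fin K) n where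
  toFun x := ⟨∑ i, Multiset.replicate (x.1 i) i, by
    rw [Multiset.card_sum]
    simp [x.2]⟩
  invFun s := ⟨fun i => s.1.count i, by
    rw [Multiset.sum_count_eq_card (fun a _ => mem_univ a), s.2]⟩
  left_inv x := by
    apply Subtype.ext; funext j
    simp only
    rw [Multiset.count_sum']
    simp [Multiset.count_replicate]
  right_inv s := by
    apply Subtype.ext
    ext a
    rw [Multiset.count_sum']
    simp [Multiset.count_replicate]

lemma card_sumTuple (K n : ℕ) :
    Nat.card {x : Fin K → ℕ // ∑ i, x i = n} = (K + n - 1).choose n := by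
  rw [Nat.card_congr (sumTupleEquivSym K n), Nat.card_eq_fintype_card,
    Sym.card_sym_eq_choose]
  simp

/-! Decompositions -/

section decomp
variable (p : ℕ) [NeZero p]

lemma card_residue_decomp (m : ℕ) :
    Nat.card {y : Fin p → ℕ // (∑ i, y i) = m} = ∑ r : ZMod p, Nat.card (YS p m r) := by
  rw [card_fiber (fun a : {y : Fin p → ℕ // (∑ i, y i) = m} => wtS p a.1)]
  refine Finset.sum_congr rfl (fun r _ => ?_)
  exact Nat.card_congr
    { toFun := fun a => ⟨a.1.1, a.1.2, a.2⟩
      invFun := fun y => ⟨⟨y.1, y.2.1⟩, y.2.2⟩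
      left_inv := fun a => rfl
      right_inv := fun y => rfl }

lemma card_X_decomp :
    Nat.card (XT p) = ∑ m : Fin p, Nat.card (YS p m.val 0) := by
  have hlt : ∀ a : XT p, (∑ i, a.1 i) < p := fun a =>
    lt_of_le_of_lt a.2.1 (Nat.sub_lt (Nat.pos_of_ne_zero (NeZero.ne p)) one_pos)
  rw [card_fiber (fun a : XT p => (⟨∑ i, a.1 i, hlt a⟩ : Fin p))]
  refine Finset.sum_congr rfl (fun m _ => ?_)
  refine Nat.card_congr
    { toFun := fun a => ⟨a.1.1, by
        have h := congrArg Fin.val a.2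
        simp only at h
        exact ⟨h, a.1.2.2⟩⟩
      invFun := fun y => ⟨⟨y.1, by
        rw [y.2.1]; exact Nat.le_sub_one_of_lt m.isLt, y.2.2⟩, by
        apply Fin.ext; simp [y.2.1]⟩
      left_inv := fun a => by
        apply Subtype.ext; apply Subtype.ext; rfl
      right_inv := fun y => rfl }

lemma card_W_decomp :
    Nat.card (WT p) = ∑ m : Fin p, Nat.card {y : Fin p → ℕ // (∑ i, y i) = m.val} := by
  have hlt : ∀ a : WT p, (∑ i, a.1 i) < p := fun a =>
    lt_of_le_of_lt a.2 (Nat.sub_lt (Nat.pos_of_ne_zero (NeZero.ne p)) one_pos)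
  rw [card_fiber (fun a : WT p => (⟨∑ i, a.1 i, hlt a⟩ : Fin p))]
  refine Finset.sum_congr rfl (fun m _ => ?_)
  refine Nat.card_congr
    { toFun := fun a => ⟨a.1.1, by
        have h := congrArg Fin.val a.2
        simpa using h⟩
      invFun := fun y => ⟨⟨y.1, by
        rw [y.2]; exact Nat.le_sub_one_of_lt m.isLt⟩, by
        apply Fin.ext; simp [y.2]⟩
      left_inv := fun a => by
        apply Subtype.ext; apply Subtype.ext; rfl
      right_inv := fun y => rfl }

def snocEquiv : WT p ≃ {x : Fin (p+1) → ℕ // ∑ i, x i = p - 1} where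
  toFun y := ⟨Fin.snoc y.1 (p - 1 - ∑ i, y.1 i), by
    rw [Fin.sum_univ_castSucc]
    simp only [Fin.snoc_castSucc, Fin.snoc_last]
    exact Nat.add_sub_cancel' y.2⟩
  invFun x := ⟨fun i => x.1 i.castSucc, by
    have : ∑ i : Fin p, x.1 i.castSucc ≤ ∑ i : Fin (p+1), x.1 i := by
      rw [Fin.sum_univ_castSucc]
      exact Nat.le_add_right _ _
    rw [x.2] at this
    exact this⟩
  left_inv y := by
    apply Subtype.ext; funext i; simp
  right_inv x := by
    apply Subtype.ext; funext i
    refine Fin.lastCases ?_ (fun j => ?_) i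
    · simp only [Fin.snoc_last]
      have h := x.2
      rw [Fin.sum_univ_castSucc] at h
      omega
    · simp

end decomp

/-! Difference-coordinates machinery -/

def extF (p : ℕ) (f : Fin p → ℕ) : ℕ → ℕ := fun n => if h : n < p then f ⟨n, h⟩ else p

def dN (p : ℕ) (f : Fin p → ℕ) : ℕ → ℕ
  | 0 => extF p f 0 - 1
  | (k+1) => extF p f (k+1) - extF p f k

def fF (g : ℕ → ℕ) : ℕ → ℕ := fun n => 1 + ∑ k ∈ range (n+1), g k

section diffs
variable {p : ℕ}

lemma extF_mono {f : Fin p → ℕ} (hf : Monotone f) (hbd : ∀ j, f j ≤ p) :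
    Monotone (extF p f) := by
  intro n m hnm
  unfold extF
  by_cases hn : n < p
  · by_cases hm : m < p
    · simp only [dif_pos hn, dif_pos hm]
      exact hf (by exact hnm)
    · simp only [dif_pos hn, dif_neg hm]
      exact hbd _
  · have hm : ¬ m < p := fun h => hn (lt_of_le_of_lt hnm h)
    simp [dif_neg hn, dif_neg hm]

lemma extF_pos {f : Fin p → ℕ} (hp : 0 < p) (hbd : ∀ j, 1 ≤ f j) (n : ℕ) :
    1 ≤ extF p f n := by
  unfold extF
  by_cases hn : n < p
  · simp only [dif_pos hn]; exact hbd _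
  · simp only [dif_neg hn]; exact hp

lemma extF_le {f : Fin p → ℕ} (hbd : ∀ j, f j ≤ p) (n : ℕ) : extF p f n ≤ p := by
  unfold extF
  by_cases hn : n < p
  · simp only [dif_pos hn]; exact hbd _
  · simp [dif_neg hn]

lemma key1 {f : Fin p → ℕ} (hp : 0 < p) (hf : Monotone f) (hbd : ∀ j, 1 ≤ f j ∧ f j ≤ p) :
    ∀ n, n < p → ∑ k ∈ range (n+1), dN p f k = extF p f n - 1 := by
  intro n
  induction n with
  | zero => intro _; simp [dN]
  | succ n ih =>
    intro hn1
    have hn : n < p := Nat.lt_of_succ_lt hn1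
    rw [Finset.sum_range_succ, ih hn]
    have h1 : extF p f n ≤ extF p f (n+1) :=
      extF_mono hf (fun j => (hbd j).2) (Nat.le_succ n)
    have h2 : 1 ≤ extF p f n := extF_pos hp (fun j => (hbd j).1) n
    show extF p f n - 1 + (extF p f (n+1) - extF p f n) = extF p f (n+1) - 1
    omega

lemma sum_partial (g : ℕ → ℕ) : ∀ N, ∑ n ∈ range N, ∑ k ∈ range (n+1), g k
    = ∑ k ∈ range N, (N - k) * g k := by
  intro N
  induction N with
  | zero => simp
  | succ N ih =>
    rw [Finset.sum_range_succ, ih]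
    have h1 : ∑ k ∈ range (N+1), (N + 1 - k) * g k
        = ∑ k ∈ range (N+1), ((N - k) * g k + g k) := by
      refine Finset.sum_congr rfl (fun k hk => ?_)
      have hk' : k ≤ N := Nat.lt_succ_iff.mp (Finset.mem_range.mp hk)
      have h2 : N + 1 - k = (N - k) + 1 := by omega
      rw [h2]; ring
    rw [h1, Finset.sum_add_distrib]
    congr 1
    rw [Finset.sum_range_succ, Nat.sub_self, Nat.zero_mul, Nat.add_zero]

lemma sum_fF (g : ℕ → ℕ) (N : ℕ) :
    ∑ n ∈ range N, fF g n = N + ∑ k ∈ range N, (N - k) * g k := by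
  unfold fF
  rw [Finset.sum_add_distrib, Finset.sum_const, Finset.card_range, smul_eq_mul, mul_one,
    sum_partial]

lemma cast_weight [NeZero p] (g : ℕ → ℕ) :
    ((∑ k ∈ range p, (p - k) * g k : ℕ) : ZMod p)
      = - ∑ k ∈ range p, (k : ZMod p) * (g k : ZMod p) := by
  rw [Nat.cast_sum, ← Finset.sum_neg_distrib]
  refine Finset.sum_congr rfl (fun k hk => ?_)
  have hkp : k ≤ p := le_of_lt (Finset.mem_range.mp hk)
  rw [Nat.cast_mul, Nat.cast_sub hkp]
  simp [ZMod.natCast_self]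

lemma wt_eq (g : ℕ → ℕ) :
    wtS p (fun i => g i.val) = ∑ k ∈ range p, (k : ZMod p) * (g k : ZMod p) := by
  rw [wtS, ← Fin.sum_univ_eq_sum_range (fun k => (k : ZMod p) * (g k : ZMod p)) p]

lemma sum_eq (g : ℕ → ℕ) : (∑ i : Fin p, g i.val) = ∑ k ∈ range p, g k :=
  Fin.sum_univ_eq_sum_range g p

end diffs

/-! The main equivalence -/

section mainequiv
variable {p : ℕ} [NeZero p]

def mainEquiv (hp : 0 < p) :
    {f : Fin p → ℕ // Monotone f ∧ (∀ j, 1 ≤ f j ∧ f j ≤ p) ∧ (∑ j, f j) % p = 0}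
      ≃ XT p where
  toFun F := by
    refine ⟨fun i => dN p F.1 i.val, ?_, ?_⟩
    · obtain ⟨hmono, hbd, hmod⟩ := F.2
      rw [sum_eq (dN p F.1)]
      have h1 : p - 1 + 1 = p := Nat.succ_pred_eq_of_pos hp
      have h2 := key1 hp hmono hbd (p-1) (by omega)
      rw [h1] at h2
      rw [h2]
      exact Nat.sub_le_sub_right (extF_le (fun j => (hbd j).2) _) 1
    · obtain ⟨hmono, hbd, hmod⟩ := F.2
      have hfF : ∀ n ∈ range p, extF p F.1 n = fF (dN p F.1) n := by
        intro n hn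
        have hn' := Finset.mem_range.mp hn
        rw [fF, key1 hp hmono hbd n hn']
        have := extF_pos hp (fun j => (hbd j).1) n
        omega
      have hsum1 : (∑ j, F.1 j) = ∑ n ∈ range p, extF p F.1 n := by
        rw [← Fin.sum_univ_eq_sum_range (extF p F.1) p]
        refine Finset.sum_congr rfl (fun i _ => ?_)
        simp [extF, i.isLt]
      have hsum2 : (∑ j, F.1 j) = p + ∑ k ∈ range p, (p - k) * dN p F.1 k := by
        rw [hsum1, Finset.sum_congr rfl hfF, sum_fF]
      have hcast : ((∑ j, F.1 j : ℕ) : ZMod p) = 0 := by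
        rw [ZMod.natCast_eq_zero_iff]
        exact Nat.dvd_of_mod_eq_zero hmod
      rw [hsum2] at hcast
      rw [Nat.cast_add, cast_weight, ZMod.natCast_self, zero_add] at hcast
      rw [wt_eq (dN p F.1)]
      exact neg_eq_zero.mp hcast
  invFun Y := by
    refine ⟨fun j => fF (fun n => if h : n < p then Y.1 ⟨n, h⟩ else 0) j.val, ?_, ?_, ?_⟩
    · intro a b hab
      unfold fF
      refine Nat.add_le_add_left (Finset.sum_le_sum_of_subset ?_) 1
      exact Finset.range_subset_range.mpr (by omega)
    · intro j
      constructor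
      · exact Nat.le_add_right 1 _
      · set yN : ℕ → ℕ := fun n => if h : n < p then Y.1 ⟨n, h⟩ else 0 with hyN
        have h1 : ∑ k ∈ range (j.val + 1), yN k ≤ ∑ k ∈ range p, yN k :=
          Finset.sum_le_sum_of_subset (Finset.range_subset_range.mpr j.isLt)
        have h2 : ∑ k ∈ range p, yN k = ∑ i, Y.1 i := by
          rw [← sum_eq yN]
          refine Finset.sum_congr rfl (fun i _ => ?_)
          simp [hyN, i.isLt]
        have h3 := Y.2.1
        show 1 + ∑ k ∈ range (j.val + 1), yN k ≤ p
        omega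
    · set yN : ℕ → ℕ := fun n => if h : n < p then Y.1 ⟨n, h⟩ else 0 with hyN
      have hsum : (∑ j : Fin p, fF yN j.val) = p + ∑ k ∈ range p, (p - k) * yN k := by
        rw [sum_eq (fF yN), sum_fF]
      have hwt : wtS p (fun i => yN i.val) = 0 := by
        have h : (fun i : Fin p => yN i.val) = Y.1 := by
          funext i; simp [hyN, i.isLt]
        rw [h, Y.2.2]
      rw [wt_eq yN] at hwt
      have hcast : ((∑ j : Fin p, fF yN j.val : ℕ) : ZMod p) = 0 := by
        rw [hsum, Nat.cast_add, cast_weight, ZMod.natCast_self, zero_add, hwt, neg_zero]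
      rw [ZMod.natCast_eq_zero_iff] at hcast
      exact Nat.mod_eq_zero_of_dvd hcast
  left_inv := by
    intro F
    obtain ⟨hmono, hbd, hmod⟩ := F.2
    apply Subtype.ext
    funext j
    show fF (fun n => if h : n < p then dN p F.1 (⟨n, h⟩ : Fin p).val else 0) j.val = F.1 j
    have h1 : ∑ k ∈ range (j.val + 1),
        (if h : k < p then dN p F.1 (⟨k, h⟩ : Fin p).val else 0)
        = ∑ k ∈ range (j.val + 1), dN p F.1 k := by
      refine Finset.sum_congr rfl (fun k hk => ?_)
      have hk' : k < p := lt_of_lt_of_le (Finset.mem_range.mp hk) j.isLt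
      simp [hk']
    rw [fF, h1, key1 hp hmono hbd j.val j.isLt]
    have h2 := extF_pos hp (fun j => (hbd j).1) j.val
    have h3 : extF p F.1 j.val = F.1 j := by simp [extF, j.isLt]
    omega
  right_inv := by
    intro Y
    apply Subtype.ext
    funext i
    set yN : ℕ → ℕ := fun n => if h : n < p then Y.1 ⟨n, h⟩ else 0 with hyN
    set f : Fin p → ℕ := fun j => fF yN j.val with hf
    show dN p f i.val = Y.1 i
    have hext : ∀ n (hn : n < p), extF p f n = fF yN n := by
      intro n hn; simp [extF, hn, hf]
    obtain ⟨n, hn⟩ := i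
    match n, hn with
    | 0, hn =>
      show dN p f 0 = Y.1 ⟨0, hn⟩
      show extF p f 0 - 1 = Y.1 ⟨0, hn⟩
      rw [hext 0 hn]
      simp [fF, Finset.sum_range_one, hyN, hn]
    | (k+1), hn =>
      show dN p f (k+1) = Y.1 ⟨k+1, hn⟩
      show extF p f (k+1) - extF p f k = Y.1 ⟨k+1, hn⟩
      rw [hext (k+1) hn, hext k (by omega)]
      rw [fF, fF, Finset.sum_range_succ (n := k+1)]
      have h : yN (k+1) = Y.1 ⟨k+1, hn⟩ := by simp [hyN, hn]
      omega

end mainequiv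

/-! Main theorem -/

theorem card_restricted_partitions_eq (p : ℕ) (hp : p.Prime) :
    Nat.card {f : Fin p → ℕ // Monotone f ∧ (∀ j, 1 ≤ f j ∧ f j ≤ p) ∧
        (∑ j, f j) % p = 0} = (p - 1 + Nat.choose (2 * p - 1) (p - 1)) / p := by
  haveI : NeZero p := ⟨hp.ne_zero⟩
  classical
  set M := {f : Fin p → ℕ // Monotone f ∧ (∀ j, 1 ≤ f j ∧ f j ≤ p) ∧ (∑ j, f j) % p = 0}
  have h1 : Nat.card M = Nat.card (XT p) := Nat.card_congr (mainEquiv hp.pos)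
  have h2 := card_X_decomp p
  -- split off the m = 0 term
  have h0 : Nat.card (YS p (0 : Fin p).val 0) = 1 := by
    rw [Fin.val_zero, card_YS_zero]; simp
  have hmem : (0 : Fin p) ∈ (univ : Finset (Fin p)) := mem_univ _
  have hsplit : ∑ m : Fin p, Nat.card (YS p m.val 0)
      = 1 + ∑ m ∈ univ.erase (0 : Fin p), Nat.card (YS p m.val 0) := by
    rw [← Finset.add_sum_erase _ _ hmem, h0]
  -- for m ≠ 0, multiply by p
  have hstep : ∀ m ∈ univ.erase (0 : Fin p),
      p * Nat.card (YS p m.val 0) = Nat.card {y : Fin p → ℕ // (∑ i, y i) = m.val} := by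
    intro m hm
    have hm0 : m ≠ 0 := (Finset.mem_erase.mp hm).1
    have hmv : m.val ≠ 0 := fun h => hm0 (Fin.ext (by simp [h]))
    have hdvd : ¬ (p ∣ m.val) := by
      intro hd
      exact hmv (Nat.eq_zero_of_dvd_of_lt hd m.isLt |> fun h => h)
    rw [card_residue_decomp p m.val]
    have : ∀ r : ZMod p, Nat.card (YS p m.val r) = Nat.card (YS p m.val 0) :=
      fun r => card_YS_eq hp m.val hdvd r 0
    rw [Finset.sum_congr rfl (fun r _ => this r), Finset.sum_const, Finset.card_univ,
      ZMod.card, smul_eq_mul]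
  -- the total count over W
  have hW : Nat.card (WT p) = (2 * p - 1).choose (p - 1) := by
    rw [Nat.card_congr (snocEquiv p), card_sumTuple]
    have hp1 : 1 ≤ p := hp.pos
    have harith : p + 1 + (p - 1) - 1 = 2 * p - 1 := by omega
    rw [harith]
  -- zero-sum count is 1
  have hT0 : Nat.card {y : Fin p → ℕ // (∑ i, y i) = (0 : Fin p).val} = 1 := by
    rw [Fin.val_zero, card_sumTuple, Nat.choose_zero_right]
  -- assemble
  obtain ⟨S, hS⟩ : ∃ S, (∑ m ∈ univ.erase (0 : Fin p), Nat.card (YS p m.val 0)) = S := ⟨_, rfl⟩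
  obtain ⟨T, hT⟩ : ∃ T, (∑ m ∈ univ.erase (0 : Fin p),
      Nat.card {y : Fin p → ℕ // (∑ i, y i) = m.val}) = T := ⟨_, rfl⟩
  rw [hS] at hsplit
  have hcardM : Nat.card M = 1 + S := by rw [h1, h2, hsplit]
  have hpS : p * S = T := by rw [← hS, Finset.mul_sum, Finset.sum_congr rfl hstep, hT]
  have hWsum : Nat.card (WT p) = 1 + T := by
    rw [card_W_decomp p, ← Finset.add_sum_erase _ _ hmem, hT0, hT]
  have hchoose : (2 * p - 1).choose (p - 1) = 1 + T := by rw [← hW, hWsum]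
  have hp1 : 1 ≤ p := hp.pos
  have hfin : p - 1 + (2 * p - 1).choose (p - 1) = p * Nat.card M := by
    rw [hcardM, Nat.mul_add, Nat.mul_one, hpS, hchoose, ← Nat.add_assoc,
      Nat.sub_add_cancel hp1]
  exact (Nat.div_eq_of_eq_mul_left hp.pos (by rw [hfin, Nat.mul_comm])).symm
end

section
/- For every prime p ≥ 5 and every integer k ≥ 2, C(kp − 1, p − 1) ≡ 1 (mod p³). -/
open Finset

private lemma aux_prod_one_sub_s17 {R : Type*} [CommRing R] (f : ℕ → R)
    (h3 : ∀ i j l, f i * f j * f l = 0) (s : Finset ℕ) :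
    2 * ∏ i ∈ s, (1 - f i) =
      2 - 2 * (∑ i ∈ s, f i) + (∑ i ∈ s, f i) ^ 2 - ∑ i ∈ s, f i ^ 2 := by
  induction s using Finset.induction_on with
  | empty => simp
  | @insert a s ha ih =>
      rw [Finset.prod_insert ha, Finset.sum_insert ha, Finset.sum_insert ha]
      have h1 : f a * (∑ i ∈ s, f i) ^ 2 = 0 := by
        rw [sq, Finset.sum_mul_sum, Finset.mul_sum]
        refine Finset.sum_eq_zero fun i _ => ?_
        rw [Finset.mul_sum]
        refine Finset.sum_eq_zero fun j _ => ?_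
        rw [← mul_assoc]; exact h3 a i j
      have h2 : f a * ∑ i ∈ s, f i ^ 2 = 0 := by
        rw [Finset.mul_sum]
        refine Finset.sum_eq_zero fun i _ => ?_
        rw [sq, ← mul_assoc]; exact h3 a i i
      linear_combination (1 - f a) * ih - h1 + h2

private lemma aux_kill {p : ℕ} (hp : p.Prime) (x : ZMod (p ^ 3))
    (hx : ZMod.castHom (dvd_pow_self p (three_ne_zero)) (ZMod p) x = 0) :
    (p : ZMod (p ^ 3)) ^ 2 * x = 0 := by
  haveI : NeZero (p ^ 3) := ⟨pow_ne_zero _ hp.ne_zero⟩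
  have hdvd : p ∣ x.val := by
    rw [ZMod.castHom_apply, ← ZMod.natCast_val, ZMod.natCast_eq_zero_iff] at hx
    exact hx
  obtain ⟨c, hc⟩ := hdvd
  have : (p : ZMod (p ^ 3)) ^ 2 * x = ((p ^ 2 * x.val : ℕ) : ZMod (p ^ 3)) := by
    push_cast [ZMod.natCast_zmod_val]
    ring
  rw [this, hc]
  have : p ^ 2 * (p * c) = p ^ 3 * c := by ring
  rw [this, Nat.cast_mul]
  simp [ZMod.natCast_self]

private lemma aux_sumsq {p : ℕ} (hp : p.Prime) (h5 : 5 ≤ p) :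
    ∑ i ∈ Finset.Ico 1 p, ((i : ZMod p)⁻¹) ^ 2 = 0 := by
  haveI : Fact p.Prime := ⟨hp⟩
  have h0 : ∑ i ∈ Finset.range p, ((i : ZMod p)⁻¹) ^ 2 = ∑ x : ZMod p, (x⁻¹) ^ 2 := by
    refine Finset.sum_nbij' (fun i => (i : ZMod p)) (fun x => x.val) ?_ ?_ ?_ ?_ ?_
    · intro a _; exact Finset.mem_univ _
    · intro a _; exact Finset.mem_range.mpr (ZMod.val_lt a)
    · intro a ha; exact ZMod.val_cast_of_lt (Finset.mem_range.mp ha)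
    · intro a _; exact ZMod.natCast_zmod_val a
    · intro a _; rfl
  have h1 : ∑ x : ZMod p, (x⁻¹ : ZMod p) ^ 2 = ∑ x : ZMod p, x ^ 2 :=
    (Fintype.sum_bijective Inv.inv inv_involutive.bijective _ _ (fun x => by simp)).symm
  have h2 : ∑ x : ZMod p, (x : ZMod p) ^ 2 = 0 := by
    have hcard : Fintype.card (ZMod p) = p := ZMod.card p
    have := FiniteField.sum_pow_lt_card_sub_one (ZMod p) 2 (by omega)
    exact this
  have h3 : ∑ i ∈ Finset.range p, ((i : ZMod p)⁻¹) ^ 2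
      = (((0:ℕ) : ZMod p)⁻¹) ^ 2 + ∑ i ∈ Finset.Ico 1 p, ((i : ZMod p)⁻¹) ^ 2 := by
    rw [Finset.range_eq_Ico]
    exact Finset.sum_eq_sum_Ico_succ_bot (by omega : 0 < p) fun i => ((i : ZMod p)⁻¹) ^ 2
  rw [h0, h1, h2] at h3
  rw [Nat.cast_zero, inv_zero, zero_pow two_ne_zero, zero_add] at h3
  exact h3.symm

private lemma aux_unit {p : ℕ} (hp : p.Prime) {i : ℕ} (hi : i ∈ Finset.Ico 1 p) :
    IsUnit ((i : ℕ) : ZMod (p ^ 3)) := by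
  rw [Finset.mem_Ico] at hi
  rw [ZMod.isUnit_iff_coprime]
  exact Nat.Coprime.pow_right _
    (Nat.coprime_comm.mp (hp.coprime_iff_not_dvd.mpr (Nat.not_dvd_of_pos_of_lt hi.1 hi.2)))

private lemma aux_pinv {p : ℕ} (hp : p.Prime) (x : ZMod (p ^ 3)) (hx : IsUnit x) :
    ZMod.castHom (dvd_pow_self p three_ne_zero) (ZMod p) (Ring.inverse x)
      = (ZMod.castHom (dvd_pow_self p three_ne_zero) (ZMod p) x)⁻¹ := by
  haveI : Fact p.Prime := ⟨hp⟩
  have h1 : ZMod.castHom (dvd_pow_self p three_ne_zero) (ZMod p) (Ring.inverse x)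
      * ZMod.castHom (dvd_pow_self p three_ne_zero) (ZMod p) x = 1 := by
    rw [← map_mul, Ring.inverse_mul_cancel _ hx, map_one]
  exact eq_inv_of_mul_eq_one_left h1

private lemma aux_hA {p : ℕ} (hp : p.Prime) (h5 : 5 ≤ p) :
    (p : ZMod (p ^ 3)) ^ 2
      * ∑ i ∈ Finset.Ico 1 p, (Ring.inverse ((i : ℕ) : ZMod (p ^ 3))) ^ 2 = 0 := by
  apply aux_kill hp
  rw [map_sum]
  have h : ∀ i ∈ Finset.Ico 1 p,
      ZMod.castHom (dvd_pow_self p three_ne_zero) (ZMod p)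
        ((Ring.inverse ((i : ℕ) : ZMod (p ^ 3))) ^ 2) = ((i : ZMod p)⁻¹) ^ 2 := by
    intro i hi
    rw [map_pow, aux_pinv hp _ (aux_unit hp hi), map_natCast]
  rw [Finset.sum_congr rfl h]
  exact aux_sumsq hp h5

private lemma aux_hB {p : ℕ} (hp : p.Prime) (h5 : 5 ≤ p) :
    (p : ZMod (p ^ 3)) * ∑ i ∈ Finset.Ico 1 p, Ring.inverse ((i : ℕ) : ZMod (p ^ 3)) = 0 := by
  haveI : Fact p.Prime := ⟨hp⟩
  set R := ZMod (p ^ 3)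
  set S := ∑ i ∈ Finset.Ico 1 p, Ring.inverse ((i : ℕ) : R) with hS
  -- involution i ↦ p - i
  have b1 : S = ∑ i ∈ Finset.Ico 1 p, Ring.inverse (((p - i : ℕ) : R)) := by
    refine Finset.sum_nbij' (fun i => p - i) (fun i => p - i) ?_ ?_ ?_ ?_ ?_
    · intro a ha; rw [Finset.mem_Ico] at *; omega
    · intro a ha; rw [Finset.mem_Ico] at *; omega
    · intro a ha; rw [Finset.mem_Ico] at ha; omega
    · intro a ha; rw [Finset.mem_Ico] at ha; omega
    · intro a ha
      rw [Finset.mem_Ico] at ha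
      congr 2
      omega
  have memb : ∀ i ∈ Finset.Ico 1 p, (p - i) ∈ Finset.Ico 1 p := by
    intro i hi; rw [Finset.mem_Ico] at *; omega
  -- pairing identity
  have b3 : ∀ i ∈ Finset.Ico 1 p,
      Ring.inverse ((i : ℕ) : R) + Ring.inverse (((p - i : ℕ) : R))
        = (p : R) * Ring.inverse (((i : ℕ) : R) * (((p - i : ℕ)) : R)) := by
    intro i hi
    have hi' := Finset.mem_Ico.mp hi
    have ha := aux_unit hp hi
    have hb := aux_unit hp (memb i hi)
    have hab : ((i : ℕ) : R) + (((p - i : ℕ)) : R) = (p : R) := by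
      rw [← Nat.cast_add]
      congr 1
      omega
    have hu := ha.mul hb
    have e1 : (Ring.inverse ((i : ℕ) : R) + Ring.inverse (((p - i : ℕ)) : R))
        * (((i : ℕ) : R) * (((p - i : ℕ)) : R)) = ((i : ℕ) : R) + (((p - i : ℕ)) : R) := by
      have e0 : (Ring.inverse ((i : ℕ) : R) + Ring.inverse (((p - i : ℕ)) : R))
          * (((i : ℕ) : R) * (((p - i : ℕ)) : R))
          = (Ring.inverse ((i : ℕ) : R) * ((i : ℕ) : R)) * (((p - i : ℕ)) : R)
            + (Ring.inverse (((p - i : ℕ)) : R) * (((p - i : ℕ)) : R)) * ((i : ℕ) : R) := by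
        ring
      rw [e0, Ring.inverse_mul_cancel _ ha, Ring.inverse_mul_cancel _ hb, one_mul, one_mul,
        add_comm]
    calc Ring.inverse ((i : ℕ) : R) + Ring.inverse (((p - i : ℕ)) : R)
        = (Ring.inverse ((i : ℕ) : R) + Ring.inverse (((p - i : ℕ)) : R))
          * ((((i : ℕ) : R) * (((p - i : ℕ)) : R))
            * Ring.inverse (((i : ℕ) : R) * (((p - i : ℕ)) : R))) := by
          rw [Ring.mul_inverse_cancel _ hu, mul_one]
      _ = ((Ring.inverse ((i : ℕ) : R) + Ring.inverse (((p - i : ℕ)) : R))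
          * (((i : ℕ) : R) * (((p - i : ℕ)) : R)))
            * Ring.inverse (((i : ℕ) : R) * (((p - i : ℕ)) : R)) := by ring
      _ = (((i : ℕ) : R) + (((p - i : ℕ)) : R))
            * Ring.inverse (((i : ℕ) : R) * (((p - i : ℕ)) : R)) := by rw [e1]
      _ = (p : R) * Ring.inverse (((i : ℕ) : R) * (((p - i : ℕ)) : R)) := by rw [hab]
  have b2 : (2 : R) * S = ∑ i ∈ Finset.Ico 1 p,
      (Ring.inverse ((i : ℕ) : R) + Ring.inverse (((p - i : ℕ)) : R)) := by
    rw [Finset.sum_add_distrib, ← b1, two_mul]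
  have hz : (p : R) ^ 2
      * ∑ i ∈ Finset.Ico 1 p, Ring.inverse (((i : ℕ) : R) * (((p - i : ℕ)) : R)) = 0 := by
    apply aux_kill hp
    rw [map_sum]
    have h : ∀ i ∈ Finset.Ico 1 p,
        ZMod.castHom (dvd_pow_self p three_ne_zero) (ZMod p)
          (Ring.inverse (((i : ℕ) : R) * (((p - i : ℕ)) : R)))
          = -(((i : ZMod p)⁻¹) ^ 2) := by
      intro i hi
      have hi' := Finset.mem_Ico.mp hi
      have hu := (aux_unit hp hi).mul (aux_unit hp (memb i hi))
      rw [aux_pinv hp _ hu, map_mul, map_natCast, map_natCast]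
      have : (((p - i : ℕ)) : ZMod p) = -(i : ZMod p) := by
        have : ((p : ℕ) : ZMod p) = 0 := ZMod.natCast_self p
        rw [Nat.cast_sub (by omega : i ≤ p), this, zero_sub]
      rw [this]
      rw [mul_neg, ← sq, inv_neg, inv_pow]
    rw [Finset.sum_congr rfl h, Finset.sum_neg_distrib, aux_sumsq hp h5, neg_zero]
  have key : (2 : R) * ((p : R) * S) = 0 := by
    calc (2 : R) * ((p : R) * S) = (p : R) * ((2 : R) * S) := by ring
      _ = (p : R) * ∑ i ∈ Finset.Ico 1 p,
            (Ring.inverse ((i : ℕ) : R) + Ring.inverse (((p - i : ℕ)) : R)) := by rw [b2]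
      _ = (p : R) * ∑ i ∈ Finset.Ico 1 p,
            ((p : R) * Ring.inverse (((i : ℕ) : R) * (((p - i : ℕ)) : R))) := by
          rw [Finset.sum_congr rfl b3]
      _ = (p : R) ^ 2
            * ∑ i ∈ Finset.Ico 1 p, Ring.inverse (((i : ℕ) : R) * (((p - i : ℕ)) : R)) := by
          rw [← Finset.mul_sum]; ring
      _ = 0 := hz
  have h2 : IsUnit (2 : R) := by
    have : ((2 : ℕ) : R) = (2 : R) := by norm_cast
    rw [← this, ZMod.isUnit_iff_coprime]
    exact Nat.Coprime.pow_right _ ((Nat.coprime_primes Nat.prime_two hp).mpr (by omega))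
  exact (IsUnit.mul_right_eq_zero h2).mp key

theorem generalized_wolstenholme (p : ℕ) (hp : p.Prime) (h5 : 5 ≤ p) (k : ℕ) (hk : 2 ≤ k) :
    Nat.choose (k * p - 1) (p - 1) ≡ 1 [MOD p ^ 3] := by
  haveI : Fact p.Prime := ⟨hp⟩
  haveI : NeZero (p ^ 3) := ⟨pow_ne_zero _ hp.ne_zero⟩
  set R := ZMod (p ^ 3)
  set g : ℕ → R := fun i => Ring.inverse ((i : ℕ) : R) with hg
  set f : ℕ → R := fun i => (k : R) * (p : R) * g i with hf
  have hpR3 : (p : R) ^ 3 = 0 := by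
    have : ((p ^ 3 : ℕ) : R) = 0 := ZMod.natCast_self _
    push_cast at this
    exact this
  -- nat-level product identity
  have hnat : Nat.choose (k * p - 1) (p - 1) * Nat.factorial (p - 1)
      = ∏ i ∈ Finset.Ico 1 p, (k * p - i) := by
    rw [mul_comm, ← Nat.descFactorial_eq_factorial_mul_choose,
      Nat.descFactorial_eq_prod_range, Finset.prod_Ico_eq_prod_range]
    refine Finset.prod_congr rfl fun i _ => ?_
    omega
  have hprod : ((Nat.choose (k * p - 1) (p - 1) : ℕ) : R) * ((Nat.factorial (p - 1) : ℕ) : R)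
      = ∏ i ∈ Finset.Ico 1 p, ((k * p - i : ℕ) : R) := by
    have := congrArg (fun n : ℕ => (n : R)) hnat
    rw [← Nat.cast_mul, ← Nat.cast_prod]; exact this
  -- factor each term
  have hple : p ≤ k * p := Nat.le_mul_of_pos_left p (by omega)
  have hfac : ∀ i ∈ Finset.Ico 1 p,
      ((k * p - i : ℕ) : R) = (-((i : ℕ) : R)) * (1 - f i) := by
    intro i hi
    have hi' := Finset.mem_Ico.mp hi
    rw [Nat.cast_sub (by omega : i ≤ k * p)]
    push_cast
    have hinv : ((i : ℕ) : R) * g i = 1 := Ring.mul_inverse_cancel _ (aux_unit hp hi)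
    rw [hf]
    dsimp only
    linear_combination (-(k : R) * (p : R)) * hinv + (Nat.cast_mul (α := R) k p)
  -- split product
  have hsplit : ∏ i ∈ Finset.Ico 1 p, ((k * p - i : ℕ) : R)
      = (∏ i ∈ Finset.Ico 1 p, (-((i : ℕ) : R))) * ∏ i ∈ Finset.Ico 1 p, (1 - f i) := by
    rw [Finset.prod_congr rfl hfac, Finset.prod_mul_distrib]
  -- first factor is (p-1)!
  have hsign : ∏ i ∈ Finset.Ico 1 p, (-((i : ℕ) : R)) = ((Nat.factorial (p - 1) : ℕ) : R) := by
    have e1 : ∏ i ∈ Finset.Ico 1 p, (-((i : ℕ) : R))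
        = (-1 : R) ^ (Finset.Ico 1 p).card * ∏ i ∈ Finset.Ico 1 p, ((i : ℕ) : R) := by
      rw [← Finset.prod_const, ← Finset.prod_mul_distrib]
      exact Finset.prod_congr rfl fun i _ => (neg_one_mul _).symm
    have e2 : (Finset.Ico 1 p).card = p - 1 := by rw [Nat.card_Ico]
    have e3 : Even (p - 1) := by
      have : Odd p := hp.odd_of_ne_two (by omega)
      obtain ⟨m, hm⟩ := this
      exact ⟨m, by omega⟩
    have e4 : ∏ i ∈ Finset.Ico 1 p, ((i : ℕ) : R) = ((Nat.factorial (p - 1) : ℕ) : R) := by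
      rw [← Nat.cast_prod]
      congr 1
      have := Finset.prod_Ico_id_eq_factorial (p - 1)
      rwa [show p - 1 + 1 = p by omega] at this
    rw [e1, e2, e3.neg_one_pow, one_mul, e4]
  -- middle product is 1
  have h3 : ∀ i j l, f i * f j * f l = 0 := by
    intro i j l
    rw [hf]
    dsimp only
    linear_combination ((k : R) ^ 3 * g i * g j * g l) * hpR3
  have hS1 : ∑ i ∈ Finset.Ico 1 p, f i = 0 := by
    rw [hf]
    dsimp only
    rw [← Finset.mul_sum, mul_assoc, aux_hB hp h5, mul_zero]
  have hS2 : ∑ i ∈ Finset.Ico 1 p, f i ^ 2 = 0 := by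
    have e : ∀ i ∈ Finset.Ico 1 p, f i ^ 2 = (k : R) ^ 2 * ((p : R) ^ 2 * g i ^ 2) := by
      intro i _
      rw [hf]
      dsimp only
      ring
    rw [Finset.sum_congr rfl e, ← Finset.mul_sum, ← Finset.mul_sum, aux_hA hp h5,
      mul_zero]
  have hmid : ∏ i ∈ Finset.Ico 1 p, (1 - f i) = 1 := by
    have key := aux_prod_one_sub_s17 f h3 (Finset.Ico 1 p)
    rw [hS1, hS2] at key
    have h2 : IsUnit (2 : R) := by
      have : ((2 : ℕ) : R) = (2 : R) := by norm_cast
      rw [← this, ZMod.isUnit_iff_coprime]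
      exact Nat.Coprime.pow_right _ ((Nat.coprime_primes Nat.prime_two hp).mpr (by omega))
    have : (2 : R) * ∏ i ∈ Finset.Ico 1 p, (1 - f i) = (2 : R) * 1 := by
      rw [key]; ring
    exact h2.mul_left_cancel this
  -- conclude
  have hfactunit : IsUnit ((Nat.factorial (p - 1) : ℕ) : R) := by
    rw [ZMod.isUnit_iff_coprime]
    refine Nat.Coprime.pow_right _ (Nat.coprime_comm.mp (hp.coprime_iff_not_dvd.mpr ?_))
    rw [hp.dvd_factorial]
    omega
  have hfinal : ((Nat.choose (k * p - 1) (p - 1) : ℕ) : R) = ((1 : ℕ) : R) := by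
    have h := hprod
    rw [hsplit, hsign, hmid, mul_one] at h
    have h' : ((Nat.factorial (p - 1) : ℕ) : R) * ((Nat.choose (k * p - 1) (p - 1) : ℕ) : R)
        = ((Nat.factorial (p - 1) : ℕ) : R) * ((1 : ℕ) : R) := by
      rw [Nat.cast_one, mul_one, mul_comm]
      exact h
    exact hfactunit.mul_left_cancel h'
  exact (ZMod.natCast_eq_natCast_iff _ _ _).mp hfinal
end
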